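/- arXiv:2001.01219 — 10 statements merged into one kernel-verified Lean document; each statement's English description precedes it below -/
import Mathlib

section
/- Let p be a prime. In the zero divisor graph Γ[Z_{p³}] of the ring Z/p³Z, every vertex of the form kp with p not dividing k (a multiple of p that is not a multiple of p²) has degree p−1. -/
/-- The vertex type of the zero divisor graph of `ZMod n`:
the nonzero zero divisors of `ZMod n`. -/
def ZDVertex (n : ℕ) : Type :=
  {x : ZMod n // x ≠ 0 ∧ ∃ y : ZMod n, y ≠ 0 ∧ x * y = 0}

instance (n : ℕ) : DecidableEq (ZDVertex n) :=
  fun a b => decidable_of_iff (a.val = b.val) Subtype.val_inj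

/-- The zero divisor graph `Γ[ZMod n]`: vertices are the nonzero zero divisors of
`ZMod n`, and two distinct vertices are adjacent iff their product is zero. -/
def zeroDivisorGraph (n : ℕ) : SimpleGraph (ZDVertex n) where
  Adj a b := a ≠ b ∧ (a.val * b.val = 0)
  symm := by
    constructor
    rintro a b ⟨hab, h⟩
    exact ⟨hab.symm, by rwa [mul_comm]⟩
  loopless := by
    constructor
    rintro a ⟨ha, -⟩
    exact ha rfl

/-- A graph is Eulerian if it has an Euler tour: a closed walk of positive length
traversing each edge exactly once. -/
def SimpleGraph.IsEulerianGraph {V : Type*} [DecidableEq V] (G : SimpleGraph V) : Prop :=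
  ∃ (v : V) (w : G.Walk v v), w.IsEulerian ∧ 0 < w.length

lemma zmod_natCast_dvd_iff {n m : ℕ} [NeZero n] (hmn : m ∣ n) (x : ZMod n) :
    (m : ZMod n) ∣ x ↔ m ∣ x.val := by
  constructor
  · rintro ⟨c, hc⟩
    have : x = ((m * c.val : ℕ) : ZMod n) := by
      push_cast [ZMod.natCast_zmod_val]; exact hc
    rw [this, ZMod.val_natCast]
    exact (Nat.dvd_mod_iff hmn).mpr ⟨c.val, rfl⟩
  · rintro ⟨c, hc⟩
    exact ⟨(c : ℕ), by rw [← ZMod.natCast_zmod_val x, hc]; push_cast; ring⟩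

lemma zmod_mul_eq_zero_iff {n : ℕ} [NeZero n] (x y : ZMod n) :
    x * y = 0 ↔ n ∣ x.val * y.val := by
  rw [← ZMod.natCast_eq_zero_iff]
  push_cast [ZMod.natCast_zmod_val]
  exact Iff.rfl


/-- For a prime `p`, every vertex of the zero divisor graph of
`ZMod (p^3)` that is a multiple of `p` but not of `p^2` has degree `p - 1`. -/
theorem zeroDivisorGraph_p_cube_degree_mult_p (p : ℕ) (hp : p.Prime)
    (v : ZDVertex (p ^ 3))
    (h1 : (p : ZMod (p ^ 3)) ∣ v.val) (h2 : ¬ (p : ZMod (p ^ 3)) ^ 2 ∣ v.val) :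
    ((zeroDivisorGraph (p ^ 3)).neighborSet v).ncard = p - 1 := by
  haveI : NeZero (p ^ 3) := ⟨pow_ne_zero 3 hp.ne_zero⟩
  have hp1 : 1 < p := hp.one_lt
  have hpdvd : p ∣ p ^ 3 := dvd_pow_self p (by norm_num)
  have hp2dvd : p ^ 2 ∣ p ^ 3 := pow_dvd_pow p (by norm_num)
  have hv1 : p ∣ v.val.val := (zmod_natCast_dvd_iff hpdvd _).mp h1
  have hv2 : ¬ p ^ 2 ∣ v.val.val := by
    intro h
    exact h2 (by rw [← Nat.cast_pow] at *; exact (zmod_natCast_dvd_iff hp2dvd _).mpr h)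
  obtain ⟨k, hk⟩ := hv1
  have hpk : ¬ p ∣ k := fun ⟨c, hc⟩ => hv2 ⟨c, by rw [hk, hc]; ring⟩
  have hp2pos : 0 < p ^ 2 := pow_pos hp.pos 2
  have hp3 : p ^ 3 = p * p ^ 2 := by ring
  -- step 1: image of neighbor set
  have himg : Subtype.val '' ((zeroDivisorGraph (p ^ 3)).neighborSet v) =
      {x : ZMod (p ^ 3) | p ^ 2 ∣ x.val ∧ x ≠ 0} := by
    ext x
    constructor
    · rintro ⟨w, hw, rfl⟩
      obtain ⟨hne, hmul⟩ := hw
      have hdvd : p ^ 3 ∣ v.val.val * w.val.val := (zmod_mul_eq_zero_iff _ _).mp hmul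
      have hdvd2 : p * p ^ 2 ∣ p * (k * w.val.val) := by
        rw [← mul_assoc, ← hk, ← hp3]; exact hdvd
      have h2' : p ^ 2 ∣ k * w.val.val := (Nat.mul_dvd_mul_iff_left hp.pos).mp hdvd2
      have hcop : Nat.Coprime (p ^ 2) k :=
        (Nat.Prime.coprime_iff_not_dvd hp).mpr hpk |>.pow_left 2
      exact ⟨hcop.dvd_of_dvd_mul_left h2', w.2.1⟩
    · rintro ⟨⟨c, hc⟩, hne⟩
      have hxzd : ∃ y : ZMod (p ^ 3), y ≠ 0 ∧ x * y = 0 := by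
        refine ⟨(p : ZMod (p ^ 3)), ?_, ?_⟩
        · rw [Ne, ZMod.natCast_eq_zero_iff]
          intro h
          exact absurd (Nat.le_of_dvd hp.pos h)
            (not_le.mpr (by calc p < p ^ 3 := by nlinarith))
        · rw [zmod_mul_eq_zero_iff, ZMod.val_natCast_of_lt (by nlinarith : p < p ^ 3), hc]
          exact ⟨c, by ring⟩
      refine ⟨⟨x, hne, hxzd⟩, ⟨?_, ?_⟩, rfl⟩
      · intro h
        apply hv2
        rw [h]
        exact ⟨c, hc⟩
      · rw [zmod_mul_eq_zero_iff, hk, hc]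
        exact ⟨k * c, by ring⟩
  -- step 2: the target set is the image of Ioo 0 p under j ↦ j * p ^ 2
  have hset : {x : ZMod (p ^ 3) | p ^ 2 ∣ x.val ∧ x ≠ 0} =
      (fun j : ℕ => ((j * p ^ 2 : ℕ) : ZMod (p ^ 3))) '' Set.Ioo 0 p := by
    ext x
    constructor
    · rintro ⟨⟨c, hc⟩, hne⟩
      have hxlt : x.val < p ^ 3 := ZMod.val_lt x
      have hclt : c < p := by
        by_contra h
        push_neg at h
        have h3 : p ^ 3 ≤ p ^ 2 * c := by
          calc p ^ 3 = p * p ^ 2 := hp3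
          _ ≤ c * p ^ 2 := Nat.mul_le_mul_right _ h
          _ = p ^ 2 * c := mul_comm _ _
        rw [hc] at hxlt
        omega
      have hcpos : 0 < c := by
        rcases Nat.eq_zero_or_pos c with h | h
        · exfalso; apply hne
          rw [← ZMod.natCast_zmod_val x, hc, h, mul_zero, Nat.cast_zero]
        · exact h
      exact ⟨c, ⟨hcpos, hclt⟩, by rw [← ZMod.natCast_zmod_val x, hc, mul_comm]⟩
    · rintro ⟨j, ⟨hj0, hjp⟩, rfl⟩
      have hlt : j * p ^ 2 < p ^ 3 := by
        calc j * p ^ 2 < p * p ^ 2 := (Nat.mul_lt_mul_right hp2pos).mpr hjp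
        _ = p ^ 3 := hp3.symm
      have hval : ((j * p ^ 2 : ℕ) : ZMod (p ^ 3)).val = j * p ^ 2 :=
        ZMod.val_natCast_of_lt hlt
      refine ⟨⟨j, by rw [hval]; ring_nf⟩, ?_⟩
      rw [Ne, ZMod.natCast_eq_zero_iff]
      intro h
      have := Nat.le_of_dvd (by positivity) h
      omega
  have hinj : Set.InjOn (fun j : ℕ => ((j * p ^ 2 : ℕ) : ZMod (p ^ 3))) (Set.Ioo 0 p) := by
    rintro a ⟨-, ha⟩ b ⟨-, hb⟩ hab
    have h1' : a * p ^ 2 < p ^ 3 := by nlinarith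
    have h2' : b * p ^ 2 < p ^ 3 := by nlinarith
    have := congrArg ZMod.val hab
    rw [ZMod.val_natCast_of_lt h1', ZMod.val_natCast_of_lt h2'] at this
    exact Nat.eq_of_mul_eq_mul_right hp2pos this
  rw [← Set.ncard_image_of_injective ((zeroDivisorGraph (p ^ 3)).neighborSet v) (α := ZDVertex (p ^ 3)) (f := Subtype.val)
    (fun _ _ h => Subtype.val_injective h)]
  erw [himg]
  rw [hset,
    Set.ncard_image_of_injOn hinj, ← Finset.coe_Ioo, Set.ncard_coe_finset,
    Nat.card_Ioo]
  omega
end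

section
/- For any prime p, the zero divisor graph Γ[Z_{p³}] of the ring Z/p³Z is not Eulerian. -/
instance (n : ℕ) [NeZero n] : Fintype (ZDVertex n) :=
  inferInstanceAs (Fintype {x : ZMod n // x ≠ 0 ∧ ∃ y : ZMod n, y ≠ 0 ∧ x * y = 0})

instance (n : ℕ) : DecidableRel (zeroDivisorGraph n).Adj :=
  fun a b => inferInstanceAs (Decidable (a ≠ b ∧ a.1 * b.1 = 0))

lemma ZD.card_aux (n m d : ℕ) [NeZero n] (hn : n = m * d) (hm : 0 < m) (hd : 0 < d) :
    Fintype.card {x : ZMod n // x ≠ 0 ∧ m ∣ x.val} = d - 1 := by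
  subst hn
  haveI : NeZero d := ⟨hd.ne'⟩
  let e : {x : ZMod (m * d) // x ≠ 0 ∧ m ∣ x.val} ≃ {a : Fin d // a ≠ 0} :=
  { toFun := fun x => ⟨⟨x.1.val / m, by
      have := ZMod.val_lt x.1
      exact Nat.div_lt_of_lt_mul this⟩, by
      intro h
      have h0 : x.1.val / m = 0 := congrArg Fin.val h
      have : x.1.val = 0 := by
        rw [← Nat.mul_div_cancel' x.2.2, h0, Nat.mul_zero]
      exact x.2.1 ((ZMod.val_eq_zero x.1).mp this)⟩
    invFun := fun a => ⟨(↑(m * a.1.val) : ZMod (m * d)), by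
      have hlt : m * a.1.val < m * d := mul_lt_mul_of_pos_left a.1.isLt hm
      constructor
      · intro h
        rw [ZMod.natCast_eq_zero_iff] at h
        have hle := Nat.le_of_dvd ?_ h
        · omega
        · have : a.1.val ≠ 0 := fun h0 => a.2 (Fin.ext h0)
          positivity
      · rw [ZMod.val_cast_of_lt hlt]
        exact ⟨a.1.val, rfl⟩⟩
    left_inv := fun x => by
      apply Subtype.ext
      show ((m * (x.1.val / m) : ℕ) : ZMod (m * d)) = x.1
      rw [Nat.mul_div_cancel' x.2.2, ZMod.natCast_zmod_val]
    right_inv := fun a => by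
      apply Subtype.ext
      apply Fin.ext
      show ((m * a.1.val : ℕ) : ZMod (m * d)).val / m = a.1.val
      have hlt : m * a.1.val < m * d := mul_lt_mul_of_pos_left a.1.isLt hm
      rw [ZMod.val_cast_of_lt hlt, Nat.mul_div_cancel_left _ hm] }
  rw [Fintype.card_congr e]
  rw [Fintype.card_subtype_compl, Fintype.card_subtype_eq (0 : Fin d), Fintype.card_fin]

section
variable {p : ℕ}

lemma ZD.mul_p2 (hp : p.Prime) (x : ZMod (p ^ 3)) (h : p ∣ x.val) :
    x * ((p ^ 2 : ℕ) : ZMod (p ^ 3)) = 0 := by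
  haveI : NeZero (p ^ 3) := ⟨pow_ne_zero 3 hp.pos.ne'⟩
  conv_lhs => rw [← ZMod.natCast_zmod_val x]
  rw [← Nat.cast_mul, ZMod.natCast_eq_zero_iff]
  obtain ⟨c, hc⟩ := h
  exact ⟨c, by rw [hc]; ring⟩

lemma ZD.mem_iff (hp : p.Prime) (x : ZMod (p ^ 3)) :
    (x ≠ 0 ∧ ∃ y : ZMod (p ^ 3), y ≠ 0 ∧ x * y = 0) ↔ (x ≠ 0 ∧ p ∣ x.val) := by
  haveI : NeZero (p ^ 3) := ⟨pow_ne_zero 3 hp.pos.ne'⟩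
  constructor
  · rintro ⟨hx, y, hy, hxy⟩
    refine ⟨hx, ?_⟩
    by_contra hdvd
    have hcop : Nat.Coprime x.val (p ^ 3) :=
      (((Nat.Prime.coprime_iff_not_dvd hp).mpr hdvd).symm).pow_right 3
    have hu : IsUnit x := by
      rw [← ZMod.natCast_zmod_val x]
      exact (ZMod.isUnit_iff_coprime x.val (p ^ 3)).mpr hcop
    exact hy ((hu.mul_right_eq_zero).mp hxy)
  · rintro ⟨hx, hdvd⟩
    refine ⟨hx, ((p ^ 2 : ℕ) : ZMod (p ^ 3)), ?_, ZD.mul_p2 hp x hdvd⟩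
    rw [Ne, ZMod.natCast_eq_zero_iff]
    intro h
    have := (Nat.pow_dvd_pow_iff_le_right hp.one_lt).mp h
    omega

lemma ZD.mul_p_iff (hp : p.Prime) (x : ZMod (p ^ 3)) :
    ((p : ℕ) : ZMod (p ^ 3)) * x = 0 ↔ p ^ 2 ∣ x.val := by
  haveI : NeZero (p ^ 3) := ⟨pow_ne_zero 3 hp.pos.ne'⟩
  conv_lhs => rw [← ZMod.natCast_zmod_val x, ← Nat.cast_mul,
    ZMod.natCast_eq_zero_iff]
  constructor
  · intro h
    have h' : p ^ 2 * p ∣ x.val * p := by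
      rw [mul_comm x.val p, ← pow_succ] at *
      exact h
    exact (Nat.mul_dvd_mul_iff_right hp.pos).mp h'
  · rintro ⟨c, hc⟩
    exact ⟨c, by rw [hc]; ring⟩

end

/-- For any prime `p`, the zero divisor graph of `ZMod (p^3)` is not
Eulerian. -/
theorem zeroDivisorGraph_p_cube_not_eulerian (p : ℕ) (hp : p.Prime) :
    ¬ (zeroDivisorGraph (p ^ 3)).IsEulerianGraph := by
  rintro ⟨u, w, hE, -⟩
  haveI : NeZero (p ^ 3) := ⟨pow_ne_zero 3 hp.pos.ne'⟩
  have hp2 := hp.two_le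
  have hplt : p < p ^ 3 := by nlinarith [sq_nonneg p]
  have hp2lt : p ^ 2 < p ^ 3 := by nlinarith [sq_nonneg p]
  -- the two witness vertices
  have hv0mem : ((p ^ 2 : ℕ) : ZMod (p ^ 3)) ≠ 0 ∧ p ∣ ((p ^ 2 : ℕ) : ZMod (p ^ 3)).val := by
    constructor
    · rw [Ne, ZMod.natCast_eq_zero_iff]
      intro h
      have := (Nat.pow_dvd_pow_iff_le_right hp.one_lt).mp h
      omega
    · rw [ZMod.val_cast_of_lt hp2lt]
      exact ⟨p, by ring⟩
  have hv1mem : ((p : ℕ) : ZMod (p ^ 3)) ≠ 0 ∧ p ∣ ((p : ℕ) : ZMod (p ^ 3)).val := by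
    constructor
    · rw [Ne, ZMod.natCast_eq_zero_iff]
      intro h
      have h1 : p ^ 3 ∣ p ^ 1 := by simpa using h
      have := (Nat.pow_dvd_pow_iff_le_right hp.one_lt).mp h1
      omega
    · rw [ZMod.val_cast_of_lt hplt]
  let v₀ : ZDVertex (p ^ 3) := ⟨((p ^ 2 : ℕ) : ZMod (p ^ 3)), (ZD.mem_iff hp _).mpr hv0mem⟩
  let v₁ : ZDVertex (p ^ 3) := ⟨((p : ℕ) : ZMod (p ^ 3)), (ZD.mem_iff hp _).mpr hv1mem⟩
  have hdeg : ∀ x, Even ((zeroDivisorGraph (p ^ 3)).degree x) :=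
    fun x => (hE.even_degree_iff).mpr (fun h => absurd rfl h)
  -- cardinality of the vertex set
  have hcard : Fintype.card (ZDVertex (p ^ 3)) = p ^ 2 - 1 := by
    have e : ZDVertex (p ^ 3) ≃ {x : ZMod (p ^ 3) // x ≠ 0 ∧ p ∣ x.val} :=
      Equiv.subtypeEquivRight (fun x => ZD.mem_iff hp x)
    rw [Fintype.card_congr e, ZD.card_aux (p ^ 3) p (p ^ 2) (by ring) hp.pos (by positivity)]
  -- degree of v₀
  have hd0 : (zeroDivisorGraph (p ^ 3)).degree v₀ = p ^ 2 - 2 := by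
    rw [← SimpleGraph.card_neighborSet_eq_degree]
    have e : (zeroDivisorGraph (p ^ 3)).neighborSet v₀ ≃ {b : ZDVertex (p ^ 3) // b ≠ v₀} := by
      apply Equiv.subtypeEquivRight
      intro b
      constructor
      · rintro ⟨h, -⟩
        exact h.symm
      · intro h
        refine ⟨h.symm, ?_⟩
        show ((p ^ 2 : ℕ) : ZMod (p ^ 3)) * b.1 = 0
        rw [mul_comm]
        exact ZD.mul_p2 hp b.1 ((ZD.mem_iff hp b.1).mp b.2).2
    rw [Fintype.card_congr e, Fintype.card_subtype_compl, Fintype.card_subtype_eq v₀, hcard]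
    omega
  -- degree of v₁
  have hd1 : (zeroDivisorGraph (p ^ 3)).degree v₁ = p - 1 := by
    rw [← SimpleGraph.card_neighborSet_eq_degree]
    have e : (zeroDivisorGraph (p ^ 3)).neighborSet v₁ ≃
        {x : ZMod (p ^ 3) // x ≠ 0 ∧ p ^ 2 ∣ x.val} := by
      have hne : ∀ x : ZMod (p ^ 3), p ^ 2 ∣ x.val → ((p : ℕ) : ZMod (p ^ 3)) ≠ x := by
        intro x hx heq
        rw [← heq, ZMod.val_cast_of_lt hplt] at hx
        have hx1 : p ^ 2 ∣ p ^ 1 := by simpa using hx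
        have := (Nat.pow_dvd_pow_iff_le_right hp.one_lt).mp hx1
        omega
      refine
      { toFun := fun b => ⟨b.1.1, b.1.2.1, (ZD.mul_p_iff hp b.1.1).mp b.2.2⟩
        invFun := fun x => ⟨⟨x.1, (ZD.mem_iff hp x.1).mpr
            ⟨x.2.1, dvd_trans (dvd_pow_self p two_ne_zero) x.2.2⟩⟩,
          fun h => hne x.1 x.2.2 (congrArg Subtype.val h), (ZD.mul_p_iff hp x.1).mpr x.2.2⟩
        left_inv := fun b => by apply Subtype.ext; apply Subtype.ext; rfl
        right_inv := fun x => by apply Subtype.ext; rfl }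
    rw [Fintype.card_congr e, ZD.card_aux (p ^ 3) (p ^ 2) p (by ring) (by positivity) hp.pos]
  have e0 := hdeg v₀
  have e1 := hdeg v₁
  rw [hd0] at e0
  rw [hd1] at e1
  have hpsq : 2 ≤ p ^ 2 := by nlinarith [sq_nonneg p]
  rcases Nat.even_or_odd p with he | ho
  · rw [Nat.even_iff] at e1 he
    omega
  · have hosq : Odd (p ^ 2) := ho.pow
    rw [Nat.even_iff] at e0
    rw [Nat.odd_iff] at hosq
    omega
end

section
/- Let p be a prime and n ≥ 2 a natural number. In the zero divisor graph Γ[Z_{pⁿ}] of the ring Z/pⁿZ, every vertex that is a nonzero multiple of p^{n−1} has degree p^{n−1}−2. -/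
/-- For a prime `p` and `n ≥ 2`, every vertex of the zero divisor graph
of `ZMod (p^n)` that is a (nonzero) multiple of `p^(n-1)` has degree `p^(n-1) - 2`. -/
theorem zeroDivisorGraph_p_pow_degree_top (p n : ℕ) (hp : p.Prime) (hn : 2 ≤ n)
    (v : ZDVertex (p ^ n)) (h : (p : ZMod (p ^ n)) ^ (n - 1) ∣ v.val) :
    ((zeroDivisorGraph (p ^ n)).neighborSet v).ncard = p ^ (n - 1) - 2 := by
  classical
  have hp2 : 2 ≤ p := hp.two_le
  haveI : NeZero (p ^ n) := ⟨pow_ne_zero _ hp.pos.ne'⟩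
  have hqpos : 0 < p ^ (n - 1) := pow_pos hp.pos _
  have hNq : p ^ n = p ^ (n - 1) * p := by
    rw [← pow_succ]; congr 1; omega
  have hqN : p ^ (n - 1) < p ^ n :=
    Nat.pow_lt_pow_right (by omega) (by omega)
  have hpq : p ∣ p ^ (n - 1) := dvd_pow_self p (by omega)
  have haN : v.val.val < p ^ n := ZMod.val_lt v.val
  have ha0 : v.val.val ≠ 0 := fun h0 => v.2.1 (by rwa [← ZMod.val_eq_zero])
  -- p^(n-1) divides v.val.val
  have hqa : p ^ (n - 1) ∣ v.val.val := by
    obtain ⟨c, hc⟩ := h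
    have hcast : v.val = ((p ^ (n - 1) : ℕ) : ZMod (p ^ n)) * c := by
      rw [hc]; push_cast; ring
    have hval : v.val.val = (p ^ (n - 1) * c.val) % p ^ n := by
      rw [hcast, ZMod.val_mul, ZMod.val_natCast_of_lt hqN]
    rw [hval]
    exact (Nat.dvd_mod_iff ⟨p, hNq⟩).mpr ⟨c.val, rfl⟩
  obtain ⟨t, ht⟩ := hqa
  have hpt : ¬ p ∣ t := by
    rintro ⟨s, hs⟩
    have hdvd : p ^ n ∣ v.val.val := ⟨s, by rw [ht, hs, hNq]; ring⟩
    exact absurd haN (not_lt.mpr (Nat.le_of_dvd (Nat.pos_of_ne_zero ha0) hdvd))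
  have hpa : p ∣ v.val.val := ht ▸ Dvd.dvd.mul_right hpq t
  -- key characterization of adjacency
  have key : ∀ x : ZMod (p ^ n), (v.val * x = 0 ↔ p ∣ x.val) := by
    intro x
    have hx : v.val * x = ((v.val.val * x.val : ℕ) : ZMod (p ^ n)) := by
      rw [Nat.cast_mul, ZMod.natCast_zmod_val, ZMod.natCast_zmod_val]
    rw [hx, ZMod.natCast_eq_zero_iff]
    constructor
    · intro hdvd
      rw [ht, mul_assoc] at hdvd
      have hdvd2 : p ^ (n - 1) * p ∣ p ^ (n - 1) * (t * x.val) := by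
        rw [← hNq]; exact hdvd
      have h2 : p ∣ t * x.val :=
        (mul_dvd_mul_iff_left hqpos.ne').mp hdvd2
      rcases hp.dvd_mul.mp h2 with h3 | h3
      · exact absurd h3 hpt
      · exact h3
    · rintro ⟨s, hs⟩
      exact ⟨t * s, by rw [ht, hs, hNq]; ring⟩
  -- the neighbor set corresponds to this finset in ZMod (p^n)
  have himage : Subtype.val '' ((zeroDivisorGraph (p ^ n)).neighborSet v) =
      ↑(Finset.univ.filter (fun x : ZMod (p ^ n) => x ≠ 0 ∧ x ≠ v.val ∧ p ∣ x.val)) := by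
    ext x
    simp only [Set.mem_image, Finset.coe_filter, Finset.mem_univ, Set.mem_setOf_eq, true_and]
    constructor
    · rintro ⟨b, hb, rfl⟩
      obtain ⟨hne, hmul⟩ := hb
      exact ⟨b.2.1, fun heq => hne (Subtype.ext heq).symm, (key _).mp hmul⟩
    · rintro ⟨hx0, hxv, hxp⟩
      have hwit : ∃ y : ZMod (p ^ n), y ≠ 0 ∧ x * y = 0 := by
        refine ⟨((p ^ (n - 1) : ℕ) : ZMod (p ^ n)), ?_, ?_⟩
        · intro h0
          rw [ZMod.natCast_eq_zero_iff] at h0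
          exact absurd (Nat.le_of_dvd hqpos h0) (by omega)
        · have hx2 : x * ((p ^ (n - 1) : ℕ) : ZMod (p ^ n)) =
              ((x.val * p ^ (n - 1) : ℕ) : ZMod (p ^ n)) := by
            rw [Nat.cast_mul, ZMod.natCast_zmod_val]
          rw [hx2, ZMod.natCast_eq_zero_iff]
          obtain ⟨s, hs⟩ := hxp
          exact ⟨s, by rw [hs, hNq]; ring⟩
      refine ⟨⟨x, hx0, hwit⟩, ⟨fun heq => hxv (congrArg Subtype.val heq).symm, (key x).mpr hxp⟩,
        rfl⟩
  have hcard1 : ((zeroDivisorGraph (p ^ n)).neighborSet v).ncard =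
      (Finset.univ.filter (fun x : ZMod (p ^ n) => x ≠ 0 ∧ x ≠ v.val ∧ p ∣ x.val)).card := by
    rw [← Set.ncard_coe_finset, ← himage]
    exact (Set.ncard_image_of_injective _ Subtype.val_injective).symm
  rw [hcard1]
  -- now count via natural numbers
  have hFG : (Finset.univ.filter
        (fun x : ZMod (p ^ n) => x ≠ 0 ∧ x ≠ v.val ∧ p ∣ x.val)).card =
      ((Finset.range (p ^ n)).filter
        (fun k => k ≠ 0 ∧ k ≠ v.val.val ∧ p ∣ k)).card := by
    apply Finset.card_nbij (fun x => x.val)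
    · intro x hx
      replace hx := (Finset.mem_filter.mp hx).2
      refine Finset.mem_filter.mpr ⟨Finset.mem_range.mpr (ZMod.val_lt x), ?_, ?_, hx.2.2⟩
      · intro h0; exact hx.1 (by rwa [← ZMod.val_eq_zero])
      · intro h0; exact hx.2.1 (ZMod.val_injective _ h0)
    · intro x _ y _ hxy
      exact ZMod.val_injective _ hxy
    · intro k hk
      simp only [Finset.coe_filter, Finset.mem_range, Set.mem_setOf_eq] at hk
      obtain ⟨hkN, hk0, hka, hkp⟩ := hk
      have hval : ((k : ℕ) : ZMod (p ^ n)).val = k := ZMod.val_natCast_of_lt hkN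
      refine ⟨((k : ℕ) : ZMod (p ^ n)), ?_, hval⟩
      simp only [Finset.coe_filter, Finset.mem_univ, Set.mem_setOf_eq, true_and]
      refine ⟨?_, ?_, by rwa [hval]⟩
      · intro h0; rw [← ZMod.val_eq_zero, hval] at h0; exact hk0 h0
      · intro h0; apply hka; rw [← hval, h0]
  rw [hFG]
  -- count the nat finset
  have hGerase : (Finset.range (p ^ n)).filter (fun k => k ≠ 0 ∧ k ≠ v.val.val ∧ p ∣ k) =
      ((Finset.range (p ^ n)).filter (fun k => k ≠ 0 ∧ p ∣ k)).erase v.val.val := by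
    ext k
    simp only [Finset.mem_erase, Finset.mem_filter, Finset.mem_range]
    tauto
  have haG : v.val.val ∈ (Finset.range (p ^ n)).filter (fun k => k ≠ 0 ∧ p ∣ k) := by
    simp only [Finset.mem_filter, Finset.mem_range]
    exact ⟨haN, ha0, hpa⟩
  have hcount : ((Finset.range (p ^ n)).filter (fun k => k ≠ 0 ∧ p ∣ k)).card =
      p ^ (n - 1) - 1 := by
    have hNpos : 0 < p ^ n := pow_pos hp.pos n
    have hNsucc : p ^ n = (p ^ n - 1) + 1 := by omega
    have hcm := Nat.card_multiples' (p ^ n - 1) p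
    rw [Nat.succ_eq_add_one, ← hNsucc] at hcm
    rw [hcm]
    -- (p^n - 1) / p = p^(n-1) - 1
    have hrw : p ^ n - 1 = (p - 1) + (p ^ (n - 1) - 1) * p := by
      have h1 : (p ^ (n - 1) - 1) * p = p ^ (n - 1) * p - p := by rw [Nat.sub_one_mul]
      have h2 : p ≤ p ^ (n - 1) * p := Nat.le_mul_of_pos_left p hqpos
      omega
    rw [hrw, Nat.add_mul_div_right _ _ hp.pos, Nat.div_eq_of_lt (by omega)]
    omega
  rw [hGerase, Finset.card_erase_of_mem haG, hcount]
  omega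
end

section
/- Let p be a prime and n ≥ 3 a natural number. In the zero divisor graph Γ[Z_{pⁿ}] of the ring Z/pⁿZ, every vertex that is a multiple of p but not a multiple of p² has degree p−1. -/
/-- For a prime `p` and `n ≥ 3`, every vertex of the zero divisor graph
of `ZMod (p^n)` that is a multiple of `p` but not of `p^2` has degree `p - 1`. -/
theorem zeroDivisorGraph_p_pow_degree_bottom (p n : ℕ) (hp : p.Prime) (hn : 3 ≤ n)
    (v : ZDVertex (p ^ n))
    (h1 : (p : ZMod (p ^ n)) ∣ v.val) (h2 : ¬ (p : ZMod (p ^ n)) ^ 2 ∣ v.val) :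
    ((zeroDivisorGraph (p ^ n)).neighborSet v).ncard = p - 1 := by
  classical
  have hp1 : 1 < p := hp.one_lt
  have hNpos : 0 < p ^ n := pow_pos hp.pos n
  haveI : NeZero (p ^ n) := ⟨hNpos.ne'⟩
  have hcast_a : ((v.val.val : ℕ) : ZMod (p ^ n)) = v.val := ZMod.natCast_zmod_val v.val
  have hane : v.val.val ≠ 0 := fun h => v.prop.1 ((ZMod.val_eq_zero v.val).mp h)
  have hpN : p < p ^ n := by
    calc p = p ^ 1 := (pow_one p).symm
    _ < p ^ n := Nat.pow_lt_pow_right hp1 (by omega)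
  have hq : p * p ^ (n - 1) = p ^ n := by
    rw [← pow_succ']
    congr 1
    omega
  -- p ∣ v.val.val in ℕ
  have hpa : p ∣ v.val.val := by
    obtain ⟨c, hc⟩ := h1
    have h : v.val.val = (p * c.val) % (p ^ n) := by
      rw [hc, ZMod.val_mul, ZMod.val_cast_of_lt hpN]
    rw [h]
    exact (Nat.dvd_mod_iff (dvd_pow_self p (by omega : n ≠ 0))).mpr ⟨c.val, rfl⟩
  -- ¬ p^2 ∣ v.val.val in ℕ
  have hp2a : ¬ p ^ 2 ∣ v.val.val := by
    intro ⟨c, hc⟩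
    apply h2
    refine ⟨(c : ZMod (p ^ n)), ?_⟩
    rw [← hcast_a, hc]
    push_cast
    ring
  obtain ⟨b, hb⟩ := hpa
  have hpb : ¬ p ∣ b := by
    intro ⟨c, hc⟩
    exact hp2a ⟨c, by rw [hb, hc]; ring⟩
  have hcop : Nat.Coprime (p ^ (n - 1)) b :=
    Nat.Coprime.pow_left _ ((hp.coprime_iff_not_dvd).mpr hpb)
  -- key equivalence
  have key : ∀ x : ZMod (p ^ n), v.val * x = 0 ↔ p ^ (n - 1) ∣ x.val := by
    intro x
    have h0 : v.val * x = ((v.val.val * x.val : ℕ) : ZMod (p ^ n)) := by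
      push_cast
      rw [hcast_a, ZMod.natCast_zmod_val]
    rw [h0, ZMod.natCast_eq_zero_iff]
    constructor
    · intro h
      obtain ⟨c, hc⟩ := h
      rw [hb] at hc
      have h' : p ^ (n - 1) ∣ b * x.val := by
        refine ⟨c, Nat.eq_of_mul_eq_mul_left hp.pos ?_⟩
        calc p * (b * x.val) = p * b * x.val := by ring
          _ = p ^ n * c := hc
          _ = p * (p ^ (n - 1) * c) := by rw [← hq]; ring
      exact Nat.Coprime.dvd_of_dvd_mul_left hcop h'
    · intro ⟨c, hc⟩
      refine ⟨b * c, ?_⟩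
      rw [hb, hc, ← hq]
      ring
  -- v.val itself is not a multiple of p^(n-1)
  have hvnot : ¬ p ^ (n - 1) ∣ v.val.val := by
    intro h
    exact hp2a (dvd_trans (pow_dvd_pow p (by omega : 2 ≤ n - 1)) h)
  -- image of the neighbor set
  have himg : Subtype.val '' ((zeroDivisorGraph (p ^ n)).neighborSet v) =
      {x : ZMod (p ^ n) | x ≠ 0 ∧ p ^ (n - 1) ∣ x.val} := by
    ext x
    constructor
    · rintro ⟨w, hw, rfl⟩
      exact ⟨w.prop.1, (key w.val).mp hw.2⟩
    · rintro ⟨hx0, hxd⟩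
      have hadj : v.val * x = 0 := (key x).mpr hxd
      refine ⟨⟨x, hx0, v.val, v.prop.1, by rwa [mul_comm]⟩, ⟨?_, hadj⟩, rfl⟩
      intro h
      apply hvnot
      have hx : x = v.val := (congrArg Subtype.val h).symm
      rw [← hx]
      exact hxd
  have hstep1 : ((zeroDivisorGraph (p ^ n)).neighborSet v).ncard =
      {x : ZMod (p ^ n) | x ≠ 0 ∧ p ^ (n - 1) ∣ x.val}.ncard := by
    rw [← himg]
    exact (Set.ncard_image_of_injective _ Subtype.val_injective).symm
  -- describe the set as an image of Ioo 0 p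
  have himg2 : {x : ZMod (p ^ n) | x ≠ 0 ∧ p ^ (n - 1) ∣ x.val} =
      (fun k : ℕ => ((k * p ^ (n - 1) : ℕ) : ZMod (p ^ n))) '' (Set.Ioo 0 p) := by
    ext x
    constructor
    · rintro ⟨hx0, c, hc⟩
      refine ⟨c, ⟨?_, ?_⟩, ?_⟩
      · rcases Nat.eq_zero_or_pos c with h | h
        · exfalso; apply hx0
          rw [← ZMod.natCast_zmod_val x, hc, h, mul_zero, Nat.cast_zero]
        · exact h
      · by_contra h
        push_neg at h
        have hge : p ^ n ≤ x.val := by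
          rw [hc, ← hq, mul_comm (p ^ (n-1)) c]
          exact Nat.mul_le_mul_right _ h
        exact absurd (ZMod.val_lt x) (not_lt.mpr hge)
      · show ((c * p ^ (n - 1) : ℕ) : ZMod (p ^ n)) = x
        rw [mul_comm, ← hc, ZMod.natCast_zmod_val]
    · rintro ⟨k, ⟨hk0, hkp⟩, rfl⟩
      have hlt : k * p ^ (n - 1) < p ^ n := by
        rw [← hq]
        exact (Nat.mul_lt_mul_right (pow_pos hp.pos _)).mpr hkp
      have hval : ((k * p ^ (n - 1) : ℕ) : ZMod (p ^ n)).val = k * p ^ (n - 1) :=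
        ZMod.val_cast_of_lt hlt
      constructor
      · intro h
        have h' : ((k * p ^ (n - 1) : ℕ) : ZMod (p ^ n)) = 0 := h
        rw [h', ZMod.val_zero] at hval
        have hpos : 0 < k * p ^ (n - 1) := Nat.mul_pos hk0 (pow_pos hp.pos _)
        omega
      · show p ^ (n - 1) ∣ ((k * p ^ (n - 1) : ℕ) : ZMod (p ^ n)).val
        rw [hval]
        exact ⟨k, mul_comm _ _⟩
  have hinj : Set.InjOn (fun k : ℕ => ((k * p ^ (n - 1) : ℕ) : ZMod (p ^ n))) (Set.Ioo 0 p) := by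
    rintro k₁ ⟨-, hk₁⟩ k₂ ⟨-, hk₂⟩ h
    have hlt₁ : k₁ * p ^ (n - 1) < p ^ n := by
      rw [← hq]; exact (Nat.mul_lt_mul_right (pow_pos hp.pos _)).mpr hk₁
    have hlt₂ : k₂ * p ^ (n - 1) < p ^ n := by
      rw [← hq]; exact (Nat.mul_lt_mul_right (pow_pos hp.pos _)).mpr hk₂
    have heq := congrArg ZMod.val h
    rw [ZMod.val_cast_of_lt hlt₁, ZMod.val_cast_of_lt hlt₂] at heq
    exact Nat.eq_of_mul_eq_mul_right (pow_pos hp.pos _) heq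
  rw [hstep1, himg2, Set.ncard_image_of_injOn hinj, ← Finset.coe_Ioo,
    Set.ncard_coe_finset, Nat.card_Ioo]
  omega
end

section
/- For any prime p and any natural number n ≥ 3, the zero divisor graph Γ[Z_{pⁿ}] of the ring Z/pⁿZ is not Eulerian. -/
/-- Counting the kernel of multiplication by `p^a` in `ZMod (p^n)`. -/
lemma card_ker (p n a : ℕ) [NeZero (p ^ n)] (hp : 0 < p) (ha : a ≤ n) :
    (Finset.univ.filter fun x : ZMod (p ^ n) => ((p : ZMod (p ^ n)) ^ a) * x = 0).card
      = p ^ a := by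
  
  rw [← Finset.card_range (p ^ a)]
  symm
  apply Finset.card_bij (fun k _ => ((p ^ (n - a) * k : ℕ) : ZMod (p ^ n)))
  · intro k hk
    simp only [Finset.mem_filter, Finset.mem_univ, true_and]
    push_cast
    rw [← mul_assoc, ← pow_add]
    have h1 : a + (n - a) = n := by omega
    rw [h1, ← Nat.cast_pow, ZMod.natCast_self, zero_mul]
  · intro k1 hk1 k2 hk2 h
    simp only [Finset.mem_range] at hk1 hk2
    have hlt : ∀ k, k < p ^ a → p ^ (n - a) * k < p ^ n := by
      intro k hk
      calc p ^ (n - a) * k < p ^ (n - a) * p ^ a :=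
            (Nat.mul_lt_mul_left (pow_pos hp _)).mpr hk
        _ = p ^ n := by rw [← pow_add]; congr 1; omega
    have := congrArg ZMod.val h
    rw [ZMod.val_cast_of_lt (hlt _ hk1), ZMod.val_cast_of_lt (hlt _ hk2)] at this
    exact Nat.eq_of_mul_eq_mul_left (pow_pos hp _) this
  · intro x hx
    simp only [Finset.mem_filter, Finset.mem_univ, true_and] at hx
    have hx' : ((p ^ a * x.val : ℕ) : ZMod (p ^ n)) = 0 := by
      push_cast
      rw [ZMod.natCast_zmod_val]
      exact hx
    rw [ZMod.natCast_eq_zero_iff] at hx'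
    have hdvd : p ^ (n - a) ∣ x.val := by
      have h2 : p ^ a * p ^ (n - a) ∣ p ^ a * x.val := by
        rw [← pow_add]
        have : a + (n - a) = n := by omega
        rwa [this]
      exact (mul_dvd_mul_iff_left (pow_pos hp a).ne').mp h2
    obtain ⟨c, hc⟩ := hdvd
    refine ⟨c, ?_, ?_⟩
    · simp only [Finset.mem_range]
      by_contra hcon
      push_neg at hcon
      have : p ^ n ≤ x.val := by
        calc p ^ n = p ^ (n - a) * p ^ a := by rw [← pow_add]; congr 1; omega
          _ ≤ p ^ (n - a) * c := Nat.mul_le_mul_left _ hcon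
          _ = x.val := hc.symm
      exact absurd (ZMod.val_lt x) (not_lt.mpr this)
    · rw [← hc, ZMod.natCast_zmod_val]

/-- Degree in the zero divisor graph as a count in `ZMod N`. -/
lemma degree_eq (N : ℕ) [NeZero N] [Fintype (ZDVertex N)] [DecidableRel (zeroDivisorGraph N).Adj]
    (v : ZDVertex N) :
    (zeroDivisorGraph N).degree v
      = (Finset.univ.filter fun x : ZMod N => x ≠ 0 ∧ x ≠ v.1 ∧ v.1 * x = 0).card := by
  rw [← SimpleGraph.card_neighborFinset_eq_degree]
  apply Finset.card_bij (fun b _ => b.1)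
  · intro b hb
    rw [SimpleGraph.mem_neighborFinset] at hb
    obtain ⟨hne, hmul⟩ := hb
    simp only [Finset.mem_filter, Finset.mem_univ, true_and]
    exact ⟨b.2.1, fun h => hne (Subtype.ext h.symm), hmul⟩
  · intro b1 _ b2 _ h
    exact Subtype.ext h
  · intro x hx
    simp only [Finset.mem_filter, Finset.mem_univ, true_and] at hx
    obtain ⟨hx0, hxv, hmul⟩ := hx
    refine ⟨⟨x, hx0, ⟨v.1, v.2.1, by rwa [mul_comm]⟩⟩, ?_, rfl⟩
    apply (SimpleGraph.mem_neighborFinset ..).mpr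
    exact ⟨fun h => hxv (congrArg Subtype.val h).symm, hmul⟩

/-- For any prime `p` and any `n ≥ 3`, the zero divisor graph of
`ZMod (p^n)` is not Eulerian. -/
theorem zeroDivisorGraph_p_pow_not_eulerian (p n : ℕ) (hp : p.Prime) (hn : 3 ≤ n) :
    ¬ (zeroDivisorGraph (p ^ n)).IsEulerianGraph := by
  haveI : NeZero (p ^ n) := ⟨pow_ne_zero _ hp.pos.ne'⟩
  haveI : Finite (ZDVertex (p ^ n)) :=
    inferInstanceAs (Finite {x : ZMod (p ^ n) // x ≠ 0 ∧ ∃ y : ZMod (p ^ n), y ≠ 0 ∧ x * y = 0})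
  haveI : Fintype (ZDVertex (p ^ n)) := Fintype.ofFinite _
  haveI : DecidableRel (zeroDivisorGraph (p ^ n)).Adj := Classical.decRel _
  rintro ⟨u, w, he, -⟩
  have hne : ∀ a, a < n → ((p : ZMod (p ^ n)) ^ a) ≠ 0 := by
    intro a ha h
    rw [← Nat.cast_pow, ZMod.natCast_eq_zero_iff] at h
    have := Nat.le_of_dvd (pow_pos hp.pos a) h
    exact absurd this (not_le.mpr (Nat.pow_lt_pow_right hp.one_lt ha))
  have hmul0 : ∀ a b : ℕ, n ≤ a + b →
      ((p : ZMod (p ^ n)) ^ a) * ((p : ZMod (p ^ n)) ^ b) = 0 := by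
    intro a b hab
    rw [← pow_add, ← Nat.cast_pow, ZMod.natCast_eq_zero_iff]
    exact pow_dvd_pow p hab
  set a : ℕ := if p = 2 then 1 else n - 1 with ha_def
  have haa : 0 < a ∧ a < n := by rw [ha_def]; split <;> omega
  set v : ZDVertex (p ^ n) :=
    ⟨(p : ZMod (p ^ n)) ^ a, hne a haa.2,
      ⟨(p : ZMod (p ^ n)) ^ (n - a), hne (n - a) (by omega), hmul0 a (n - a) (by omega)⟩⟩
    with hv_def
  have heven : Even ((zeroDivisorGraph (p ^ n)).degree v) :=
    (he.even_degree_iff (x := v)).mpr (fun h => absurd rfl h)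
  rw [degree_eq] at heven
  set S : Finset (ZMod (p ^ n)) :=
    Finset.univ.filter fun x : ZMod (p ^ n) => ((p : ZMod (p ^ n)) ^ a) * x = 0 with hS_def
  have hScard : S.card = p ^ a := card_ker p n a hp.pos (le_of_lt haa.2)
  have h0S : (0 : ZMod (p ^ n)) ∈ S := by
    simp [hS_def]
  by_cases hp2 : p = 2
  · -- a = 1, v.1 * v.1 ≠ 0
    have ha1 : a = 1 := by rw [ha_def, if_pos hp2]
    have hvv : ((p : ZMod (p ^ n)) ^ a) * ((p : ZMod (p ^ n)) ^ a) ≠ 0 := by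
      rw [← pow_add]
      exact hne (a + a) (by omega)
    have hT : (Finset.univ.filter fun x : ZMod (p ^ n) =>
        x ≠ 0 ∧ x ≠ v.1 ∧ v.1 * x = 0) = S.erase 0 := by
      ext x
      simp only [Finset.mem_filter, Finset.mem_univ, true_and, Finset.mem_erase, hS_def, hv_def]
      constructor
      · rintro ⟨h1, h2, h3⟩; exact ⟨h1, h3⟩
      · rintro ⟨h1, h3⟩
        refine ⟨h1, ?_, h3⟩
        rintro rfl
        exact hvv h3
    rw [hT, Finset.card_erase_of_mem h0S, hScard, ha1, hp2] at heven
    simp at heven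
  · -- p odd, a = n - 1
    have ha1 : a = n - 1 := by rw [ha_def, if_neg hp2]
    have hvS : v.1 ∈ S.erase 0 := by
      refine Finset.mem_erase.mpr ⟨hne a haa.2, ?_⟩
      simp only [hS_def, Finset.mem_filter, Finset.mem_univ, true_and, hv_def]
      exact hmul0 a a (by omega)
    have hT : (Finset.univ.filter fun x : ZMod (p ^ n) =>
        x ≠ 0 ∧ x ≠ v.1 ∧ v.1 * x = 0) = (S.erase 0).erase v.1 := by
      ext x
      simp only [Finset.mem_filter, Finset.mem_univ, true_and, Finset.mem_erase, hS_def, hv_def]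
      tauto
    rw [hT, Finset.card_erase_of_mem hvS, Finset.card_erase_of_mem h0S, hScard] at heven
    have hodd : Odd (p ^ a) := (hp.odd_of_ne_two hp2).pow
    have hbig : 3 ≤ p ^ a := by
      calc 3 ≤ p := by have := hp.two_le; omega
        _ = p ^ 1 := (pow_one p).symm
        _ ≤ p ^ a := Nat.pow_le_pow_right hp.pos (by omega)
    obtain ⟨k, hk⟩ := hodd
    obtain ⟨j, hj⟩ := heven
    omega
end

section
/- Let p and q be distinct odd primes. The zero divisor graph Γ[Z_{pq}] of the ring Z/pqZ is Eulerian. -/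
/-! ### Auxiliary material: existence of Euler tours (Hierholzer's theorem) -/

open SimpleGraph

namespace EulerAux

set_option linter.unusedSectionVars false

variable {V : Type*} [Fintype V] [DecidableEq V] {G : SimpleGraph V} [DecidableRel G.Adj]

/-- Count of edges of a nodup list incident to a vertex, as a finset card. -/
lemma countP_eq_card {l : List (Sym2 V)} (hl : l.Nodup) (x : V) :
    l.countP (fun e => x ∈ e) = (l.toFinset.filter (fun e => x ∈ e)).card := by
  rw [List.countP_eq_length_filter, ← List.toFinset_card_of_nodup (hl.filter _)]
  congr 1
  ext e
  simp

/-- An open trail can be extended by an unused edge, if all degrees are even. -/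
lemma exists_unused_edge_of_open_trail (heven : ∀ x, Even (G.degree x))
    {v u : V} (hvu : v ≠ u) {p : G.Walk v u} (hp : p.IsTrail) :
    ∃ x, ∃ _h : G.Adj u x, s(u, x) ∉ p.edges := by
  by_contra hcon
  push_neg at hcon
  have hodd : ¬ Even (p.edges.countP (fun e => u ∈ e)) := by
    rw [hp.even_countP_edges_iff u]
    intro h
    exact (h hvu).2 rfl
  apply hodd
  have hsub : G.incidenceFinset u ⊆ p.edges.toFinset.filter (fun e => u ∈ e) := by
    intro e
    induction e with
    | h a b =>
      intro he
      rw [mem_incidenceFinset, mk'_mem_incidenceSet_iff] at he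
      obtain ⟨hadj, h1 | h1⟩ := he
      · subst h1
        rw [Finset.mem_filter, List.mem_toFinset]
        exact ⟨hcon b hadj, Sym2.mem_mk_left _ _⟩
      · subst h1
        rw [Finset.mem_filter, List.mem_toFinset, Sym2.eq_swap]
        exact ⟨hcon a hadj.symm, Sym2.mem_mk_left _ _⟩
  have hsup : p.edges.toFinset.filter (fun e => u ∈ e) ⊆ G.incidenceFinset u := by
    intro e he
    rw [Finset.mem_filter, List.mem_toFinset] at he
    rw [mem_incidenceFinset]
    exact ⟨p.edges_subset_edgeSet he.1, he.2⟩
  have : p.edges.toFinset.filter (fun e => u ∈ e) = G.incidenceFinset u :=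
    Finset.Subset.antisymm hsup hsub
  rw [countP_eq_card hp.edges_nodup, this, card_incidenceFinset_eq_degree]
  exact heven u

/-- In an even graph, every vertex of positive degree lies on a closed trail of
positive length. -/
lemma exists_closed_trail (heven : ∀ x, Even (G.degree x)) {v : V}
    (hd : 0 < G.degree v) :
    ∃ c : G.Walk v v, c.IsTrail ∧ 0 < c.length := by
  by_contra hcon
  push_neg at hcon
  have key : ∀ k : ℕ, ∃ u, v ≠ u ∧ ∃ q : G.Walk v u, q.IsTrail ∧ q.length = k + 1 := by
    intro k
    induction k with
    | zero =>
      rw [← card_neighborFinset_eq_degree, Finset.card_pos] at hd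
      obtain ⟨x, hx⟩ := hd
      rw [mem_neighborFinset] at hx
      exact ⟨x, hx.ne, Walk.cons hx Walk.nil, by simp [Walk.isTrail_def], by simp⟩
    | succ k ih =>
      obtain ⟨u, hvu, q, hq, hlen⟩ := ih
      obtain ⟨x, hux, hnot⟩ := exists_unused_edge_of_open_trail heven hvu hq
      have hq' : (q.concat hux).IsTrail := by
        rw [Walk.isTrail_def, Walk.edges_concat, List.concat_eq_append, List.nodup_append]
        refine ⟨hq.edges_nodup, List.nodup_singleton _, ?_⟩
        intro e he e' he'
        rw [List.mem_singleton] at he'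
        subst he'
        exact fun h => hnot (h ▸ he)
      refine ⟨x, ?_, q.concat hux, hq', by rw [Walk.length_concat, hlen]⟩
      rintro rfl
      have := hcon (q.concat hux) hq'
      rw [Walk.length_concat] at this
      omega
  obtain ⟨u, hvu, q, hq, hlen⟩ := key G.edgeFinset.card
  have hle : q.length ≤ G.edgeFinset.card := by
    have h1 : q.edges.toFinset ⊆ G.edgeFinset := by
      intro e he
      rw [List.mem_toFinset] at he
      rw [mem_edgeFinset]
      exact q.edges_subset_edgeSet he
    calc q.length = q.edges.toFinset.card := by
          rw [List.toFinset_card_of_nodup hq.edges_nodup, q.length_edges]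
      _ ≤ G.edgeFinset.card := Finset.card_le_card h1
  omega

lemma length_rotate {v u : V} (c : G.Walk v v) (h : u ∈ c.support) :
    (c.rotate u h).length = c.length := by
  rw [← Walk.length_darts, ← Walk.length_darts]
  exact (c.rotate_darts u h).perm.length_eq

/-- Hierholzer's extension step, by induction on the number of unused edges. -/
lemma main_induction (hconn : G.Connected) (heven : ∀ x, Even (G.degree x)) :
    ∀ n : ℕ, ∀ v : V, ∀ w : G.Walk v v, w.IsTrail → 0 < w.length →
      G.edgeFinset.card ≤ w.length + n →
      ∃ u, ∃ c : G.Walk u u, c.IsEulerian ∧ 0 < c.length := by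
  intro n
  induction n with
  | zero =>
    intro v w hw hpos hcard
    refine ⟨v, w, hw.isEulerian_of_forall_mem ?_, hpos⟩
    intro e he
    have h1 : w.edges.toFinset ⊆ G.edgeFinset := fun e' he' =>
      mem_edgeFinset.mpr (w.edges_subset_edgeSet (List.mem_toFinset.mp he'))
    have h2 : G.edgeFinset.card ≤ w.edges.toFinset.card := by
      rw [List.toFinset_card_of_nodup hw.edges_nodup, w.length_edges]
      omega
    have : w.edges.toFinset = G.edgeFinset := Finset.eq_of_subset_of_card_le h1 h2
    rw [← List.mem_toFinset, this, mem_edgeFinset]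
    exact he
  | succ n ih =>
    intro v w hw hpos hcard
    by_cases hall : ∀ e ∈ G.edgeSet, e ∈ w.edges
    · exact ⟨v, w, hw.isEulerian_of_forall_mem hall, hpos⟩
    push_neg at hall
    obtain ⟨e₀, he₀, he₀'⟩ := hall
    -- find a vertex on w with an unused incident edge
    have hattach : ∃ a, a ∈ w.support ∧ ∃ b, G.Adj a b ∧ s(a, b) ∉ w.edges := by
      have aux : ∀ (x z : V) (pw : G.Walk x z), z ∈ w.support →
          (∃ b, G.Adj x b ∧ s(x, b) ∉ w.edges) →
          ∃ a, a ∈ w.support ∧ ∃ b, G.Adj a b ∧ s(a, b) ∉ w.edges := by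
        intro x z pw
        induction pw with
        | nil => exact fun hz h => ⟨_, hz, h⟩
        | @cons x y _ hxy pw' ih2 =>
          intro hz h
          by_cases hx : x ∈ w.support
          · exact ⟨x, hx, h⟩
          · refine ih2 hz ⟨x, hxy.symm, fun hmem => hx ?_⟩
            exact w.snd_mem_support_of_mem_edges hmem
      induction e₀ with
      | h a₀ b₀ =>
        rw [mem_edgeSet] at he₀
        obtain ⟨pw⟩ := hconn.preconnected a₀ v
        exact aux a₀ v pw w.start_mem_support ⟨b₀, he₀, he₀'⟩
    obtain ⟨a, ha, b, hab, hunused⟩ := hattach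
    -- rotate w to start at a
    set w' := w.rotate a ha with hw'def
    have hw' : w'.IsTrail := hw.rotate ha
    have hw'edges : ∀ e, e ∈ w'.edges ↔ e ∈ w.edges := fun e =>
      (w.rotate_edges a ha).perm.mem_iff
    have hw'len : w'.length = w.length := length_rotate w ha
    -- deleted graph
    set G' := G.deleteEdges {e | e ∈ w.edges} with hG'def
    haveI : DecidableRel G'.Adj := fun x y =>
      decidable_of_iff (G.Adj x y ∧ s(x, y) ∉ w.edges) (by
        rw [hG'def, deleteEdges_adj]; simp)
    have hG'le : G' ≤ G := G.deleteEdges_le _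
    have hG'adj : ∀ x y : V, G'.Adj x y ↔ G.Adj x y ∧ s(x, y) ∉ w.edges := by
      intro x y
      rw [hG'def, deleteEdges_adj]
      simp
    -- even degrees in G'
    have hdeg : ∀ x, G'.degree x + w.edges.countP (fun e => x ∈ e) = G.degree x := by
      intro x
      rw [← card_incidenceFinset_eq_degree, ← card_incidenceFinset_eq_degree,
        countP_eq_card hw.edges_nodup]
      rw [← Finset.card_union_of_disjoint]
      · congr 1
        apply Finset.Subset.antisymm
        · intro e he
          rw [Finset.mem_union] at he
          rcases he with he | he
          · rw [mem_incidenceFinset, incidenceSet] at he ⊢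
            refine ⟨?_, he.2⟩
            have := he.1
            rw [hG'def, edgeSet_deleteEdges] at this
            exact this.1
          · rw [Finset.mem_filter, List.mem_toFinset] at he
            rw [mem_incidenceFinset]
            exact ⟨w.edges_subset_edgeSet he.1, he.2⟩
        · intro e he
          rw [mem_incidenceFinset] at he
          rw [Finset.mem_union]
          by_cases hmem : e ∈ w.edges
          · right
            rw [Finset.mem_filter, List.mem_toFinset]
            exact ⟨hmem, he.2⟩
          · left
            rw [mem_incidenceFinset]
            refine ⟨?_, he.2⟩
            rw [hG'def, edgeSet_deleteEdges]
            exact ⟨he.1, hmem⟩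
      · rw [Finset.disjoint_left]
        intro e he he'
        rw [mem_incidenceFinset] at he
        rw [Finset.mem_filter, List.mem_toFinset] at he'
        have := he.1
        rw [hG'def, edgeSet_deleteEdges] at this
        exact this.2 he'.1
    have heven' : ∀ x, Even (G'.degree x) := by
      intro x
      have hc : Even (w.edges.countP (fun e => x ∈ e)) := by
        rw [hw.even_countP_edges_iff x]
        intro h
        exact absurd rfl h
      have hd := hdeg x
      obtain ⟨k1, hk1⟩ := hc
      obtain ⟨k2, hk2⟩ := heven x
      exact ⟨k2 - k1, by omega⟩
    -- positive degree of a in G'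
    have hdega : 0 < G'.degree a := by
      rw [← card_neighborFinset_eq_degree, Finset.card_pos]
      exact ⟨b, (mem_neighborFinset _ _ _).mpr ((hG'adj a b).mpr ⟨hab, hunused⟩)⟩
    obtain ⟨c', hc', hc'pos⟩ := exists_closed_trail (G := G') heven' hdega
    -- transfer back to G
    have hsubE : ∀ e ∈ c'.edges, e ∈ G.edgeSet := fun e he =>
      (edgeSet_subset_edgeSet.mpr hG'le) (c'.edges_subset_edgeSet he)
    set c := c'.transfer G hsubE with hcdef
    have hcedges : c.edges = c'.edges := c'.edges_transfer hsubE
    have hc : c.IsTrail := by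
      rw [Walk.isTrail_def, hcedges]
      exact hc'.edges_nodup
    have hclen : c.length = c'.length := by
      rw [← Walk.length_edges, ← Walk.length_edges, hcedges]
    have hcnotin : ∀ e ∈ c.edges, e ∉ w.edges := by
      intro e he
      rw [hcedges] at he
      have := c'.edges_subset_edgeSet he
      rw [hG'def, edgeSet_deleteEdges] at this
      exact this.2
    -- splice
    set W := c.append w' with hWdef
    have hWtrail : W.IsTrail := by
      rw [Walk.isTrail_def, hWdef, Walk.edges_append, List.nodup_append]
      refine ⟨hc.edges_nodup, hw'.edges_nodup, ?_⟩
      intro e he e' he' hee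
      subst hee
      exact hcnotin e he ((hw'edges e).mp he')
    have hWlen : W.length = c.length + w.length := by
      rw [hWdef, Walk.length_append, hw'len]
    apply ih a W hWtrail
    · omega
    · omega

/-- Euler's theorem: a connected graph with all degrees even and at least one
edge has an Euler tour. -/
theorem euler_existence (hconn : G.Connected) (heven : ∀ x, Even (G.degree x))
    (hE : G.edgeSet.Nonempty) :
    ∃ u, ∃ c : G.Walk u u, c.IsEulerian ∧ 0 < c.length := by
  obtain ⟨e, he⟩ := hE
  induction e with
  | h a b =>
    rw [mem_edgeSet] at he
    have hdeg : 0 < G.degree a := by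
      rw [← card_neighborFinset_eq_degree, Finset.card_pos]
      exact ⟨b, (mem_neighborFinset _ _ _).mpr he⟩
    obtain ⟨w, hw, hwpos⟩ := exists_closed_trail heven hdeg
    exact main_induction hconn heven G.edgeFinset.card a w hw hwpos (by omega)

/-- A finset admitting a fixed-point-free involution has even cardinality. -/
lemma even_card_of_involution {α : Type*} [DecidableEq α] (s : Finset α) (i : α → α)
    (h1 : ∀ a ∈ s, i a ∈ s) (h2 : ∀ a ∈ s, i (i a) = a) (h3 : ∀ a ∈ s, i a ≠ a) :
    Even s.card := by
  induction s using Finset.strongInduction with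
  | _ s ih =>
    rcases s.eq_empty_or_nonempty with rfl | ⟨a, ha⟩
    · simp
    · have hia : i a ∈ s := h1 a ha
      have hsub : {a, i a} ⊆ s := by
        intro x hx
        rcases Finset.mem_insert.mp hx with rfl | hx
        · exact ha
        · rw [Finset.mem_singleton] at hx; subst hx; exact hia
      have hpair : ({a, i a} : Finset α).card = 2 := by
        rw [Finset.card_insert_of_notMem (by simp [Ne.symm (h3 a ha)]), Finset.card_singleton]
      set t := s \ {a, i a} with ht
      have htcard : t.card + 2 = s.card := by
        rw [ht, Finset.card_sdiff_of_subset hsub, hpair]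
        have := Finset.card_le_card hsub
        omega
      have htss : t ⊂ s := by
        rw [Finset.ssubset_iff_of_subset Finset.sdiff_subset]
        exact ⟨a, ha, by simp [ht]⟩
      have hmem : ∀ b ∈ t, b ∈ s ∧ b ≠ a ∧ b ≠ i a := by
        intro b hb
        rw [ht, Finset.mem_sdiff, Finset.mem_insert, Finset.mem_singleton] at hb
        tauto
      have h1' : ∀ b ∈ t, i b ∈ t := by
        intro b hb
        obtain ⟨hbs, hba, hbia⟩ := hmem b hb
        rw [ht, Finset.mem_sdiff, Finset.mem_insert, Finset.mem_singleton]
        refine ⟨h1 b hbs, ?_⟩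
        push_neg
        constructor
        · rintro h
          exact hbia (by rw [← h2 b hbs, h])
        · intro h
          exact hba (by
            have := congrArg i h
            rwa [h2 b hbs, h2 a ha] at this)
      obtain ⟨k, hk⟩ := ih t htss (fun b hb => h1' b hb) (fun b hb => h2 b (hmem b hb).1)
        (fun b hb => h3 b (hmem b hb).1)
      exact ⟨k + 1, by omega⟩

end EulerAux

/-! ### Instances for the zero divisor graph -/

instance ZDVertex.fintype (n : ℕ) [NeZero n] : Fintype (ZDVertex n) := by
  unfold ZDVertex
  infer_instance

instance zeroDivisorGraph.adjDecidable (n : ℕ) :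
    DecidableRel (zeroDivisorGraph n).Adj :=
  fun a b => decidable_of_iff (a ≠ b ∧ (a.val * b.val = 0)) Iff.rfl

/-- For distinct odd primes `p` and `q`, the zero divisor graph of
`ZMod (p*q)` is Eulerian. -/
theorem zeroDivisorGraph_pq_eulerian (p q : ℕ) (hp : p.Prime) (hq : q.Prime)
    (hpq : p ≠ q) (hop : Odd p) (hoq : Odd q) :
    (zeroDivisorGraph (p * q)).IsEulerianGraph := by
  haveI : NeZero (p * q) := ⟨Nat.mul_ne_zero hp.ne_zero hq.ne_zero⟩
  have hp1 : 1 < p := hp.one_lt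
  have hq1 : 1 < q := hq.one_lt
  have hcop : Nat.Coprime p q := (Nat.coprime_primes hp hq).mpr hpq
  have hltp : p < p * q := by nlinarith
  have hltq : q < p * q := by nlinarith
  set G := zeroDivisorGraph (p * q) with hG
  have hGadj : ∀ a b : ZDVertex (p * q), G.Adj a b ↔ a ≠ b ∧ a.1 * b.1 = 0 := fun a b => Iff.rfl
  -- basic ZMod lemmas
  have hmul : ∀ x y : ZMod (p * q), x * y = 0 ↔ p * q ∣ x.val * y.val := by
    intro x y
    rw [← ZMod.natCast_eq_zero_iff]
    rw [Nat.cast_mul, ZMod.natCast_val, ZMod.natCast_val, ZMod.cast_id, ZMod.cast_id]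
  have hvalzero : ∀ x : ZMod (p * q), p * q ∣ x.val → x = 0 := fun x h =>
    (ZMod.val_eq_zero x).mp (Nat.eq_zero_of_dvd_of_lt h (ZMod.val_lt x))
  -- every vertex lies on exactly one "side"
  have hside : ∀ x : ZDVertex (p * q),
      (p ∣ x.1.val ∧ ¬ q ∣ x.1.val) ∨ (q ∣ x.1.val ∧ ¬ p ∣ x.1.val) := by
    intro x
    obtain ⟨hx0, y, hy0, hxy⟩ := x.2
    have hnotboth : ¬ (p ∣ x.1.val ∧ q ∣ x.1.val) := by
      rintro ⟨h1, h2⟩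
      exact hx0 (hvalzero _ (hcop.mul_dvd_of_dvd_of_dvd h1 h2))
    have hone : p ∣ x.1.val ∨ q ∣ x.1.val := by
      by_contra hcon2
      push_neg at hcon2
      obtain ⟨hnp, hnq⟩ := hcon2
      have hd : p * q ∣ x.1.val * y.val := (hmul _ _).mp hxy
      have h1 : p ∣ y.val :=
        (hp.dvd_mul.mp ((dvd_mul_right p q).trans hd)).resolve_left hnp
      have h2 : q ∣ y.val :=
        (hq.dvd_mul.mp ((dvd_mul_left q p).trans hd)).resolve_left hnq
      exact hy0 (hvalzero y (hcop.mul_dvd_of_dvd_of_dvd h1 h2))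
    tauto
  -- adjacency across the two sides
  have hcross : ∀ a b : ZDVertex (p * q), p ∣ a.1.val → q ∣ b.1.val → G.Adj a b := by
    intro a b hpa hqb
    refine (hGadj a b).mpr ⟨?_, (hmul _ _).mpr (mul_dvd_mul hpa hqb)⟩
    rintro rfl
    rcases hside a with ⟨-, hnq⟩ | ⟨-, hnp⟩
    · exact hnq hqb
    · exact hnp hpa
  -- no adjacency within one side
  have hsame : ∀ (r : ℕ), r.Prime → r ∣ p * q → ∀ a b : ZDVertex (p * q),
      ¬ r ∣ a.1.val → ¬ r ∣ b.1.val → a.1 * b.1 ≠ 0 := by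
    intro r hr hrn a b hra hrb h
    have hd : r ∣ a.1.val * b.1.val := hrn.trans ((hmul _ _).mp h)
    rcases hr.dvd_mul.mp hd with h' | h'
    · exact hra h'
    · exact hrb h'
  -- the two pivot vertices
  have hpne : ((p : ℕ) : ZMod (p * q)) ≠ 0 := by
    rw [Ne, ZMod.natCast_eq_zero_iff]
    intro h
    have := Nat.le_of_dvd (by omega) h
    omega
  have hqne : ((q : ℕ) : ZMod (p * q)) ≠ 0 := by
    rw [Ne, ZMod.natCast_eq_zero_iff]
    intro h
    have := Nat.le_of_dvd (by omega) h
    omega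
  have hpq0 : ((p : ℕ) : ZMod (p * q)) * ((q : ℕ) : ZMod (p * q)) = 0 := by
    rw [← Nat.cast_mul, ZMod.natCast_self]
  have hqp0 : ((q : ℕ) : ZMod (p * q)) * ((p : ℕ) : ZMod (p * q)) = 0 := by
    rw [mul_comm ((q : ℕ) : ZMod (p * q)) ((p : ℕ) : ZMod (p * q))]; exact hpq0
  set vp : ZDVertex (p * q) := ⟨((p : ℕ) : ZMod (p * q)), hpne, ⟨_, hqne, hpq0⟩⟩ with hvp
  set vq : ZDVertex (p * q) := ⟨((q : ℕ) : ZMod (p * q)), hqne, ⟨_, hpne, hqp0⟩⟩ with hvq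
  have hpvp : p ∣ vp.1.val := by
    rw [hvp]
    show p ∣ ((p : ℕ) : ZMod (p * q)).val
    rw [ZMod.val_cast_of_lt hltp]
  have hqvq : q ∣ vq.1.val := by
    rw [hvq]
    show q ∣ ((q : ℕ) : ZMod (p * q)).val
    rw [ZMod.val_cast_of_lt hltq]
  -- connectivity
  have hreach : ∀ a : ZDVertex (p * q), G.Reachable a vp := by
    intro a
    rcases hside a with ⟨hpa, -⟩ | ⟨hqa, -⟩
    · exact ((hcross a vq hpa hqvq).reachable).trans ((hcross vp vq hpvp hqvq).reachable.symm)
    · exact ((hcross vp a hpvp hqa).reachable).symm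
  have hconn : G.Connected := by
    haveI : Nonempty (ZDVertex (p * q)) := ⟨vp⟩
    exact ⟨fun a b => (hreach a).trans (hreach b).symm⟩
  -- negation as a vertex
  have hnegmem : ∀ y : ZDVertex (p * q),
      (-y.1 ≠ 0 ∧ ∃ z : ZMod (p * q), z ≠ 0 ∧ (-y.1) * z = 0) := by
    intro y
    obtain ⟨hy0, z, hz0, hyz⟩ := y.2
    exact ⟨neg_ne_zero.mpr hy0, z, hz0, by rw [neg_mul, hyz, neg_zero]⟩
  set negV : ZDVertex (p * q) → ZDVertex (p * q) :=
    fun y => ⟨-y.1, hnegmem y⟩ with hnegV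
  have hnegV_invol : ∀ y, negV (negV y) = y := by
    intro y
    rw [hnegV]
    exact Subtype.ext (neg_neg _)
  have hnegV_ne : ∀ y : ZDVertex (p * q), negV y ≠ y := by
    intro y hy
    have h1 : -y.1 = y.1 := congrArg Subtype.val hy
    have h2 : y.1 + y.1 = 0 := by
      nth_rewrite 1 [← h1]
      ring
    have h3 : ((2 * y.1.val : ℕ) : ZMod (p * q)) = 0 := by
      push_cast
      rw [ZMod.natCast_val, ZMod.cast_id]
      rw [two_mul]
      exact h2
    rw [ZMod.natCast_eq_zero_iff] at h3
    have hoddn : Odd (p * q) := hop.mul hoq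
    have hcop2 : Nat.Coprime (p * q) 2 := by
      rw [Nat.coprime_comm]
      refine (Nat.prime_two.coprime_iff_not_dvd).mpr ?_
      intro hdvd
      obtain ⟨k, hk⟩ := hoddn
      obtain ⟨m, hm⟩ := hdvd
      omega
    have h4 : p * q ∣ y.1.val := hcop2.dvd_of_dvd_mul_left h3
    exact y.2.1 (hvalzero _ h4)
  have hAdjneg : ∀ x y : ZDVertex (p * q), G.Adj x y → G.Adj x (negV y) := by
    intro x y hxy
    obtain ⟨hne, hprod⟩ := (hGadj x y).mp hxy
    refine (hGadj x (negV y)).mpr ⟨?_, by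
      show x.1 * (-y.1) = 0
      rw [mul_neg, hprod, neg_zero]⟩
    intro heq
    have hx1 : x.1 = -y.1 := congrArg Subtype.val heq
    have hyy : y.1 * y.1 = 0 := by
      have : (-y.1) * y.1 = 0 := by rw [← hx1]; exact hprod
      rw [neg_mul, neg_eq_zero] at this
      exact this
    rcases hside y with ⟨-, hnq⟩ | ⟨-, hnp⟩
    · exact hsame q hq (dvd_mul_left q p) y y hnq hnq hyy
    · exact hsame p hp (dvd_mul_right p q) y y hnp hnp hyy
  -- all degrees are even
  have heven : ∀ x : ZDVertex (p * q), Even (G.degree x) := by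
    intro x
    rw [← card_neighborFinset_eq_degree]
    apply EulerAux.even_card_of_involution _ negV
    · intro y hy
      rw [mem_neighborFinset] at hy ⊢
      exact hAdjneg x y hy
    · intro y _
      exact hnegV_invol y
    · intro y _
      exact hnegV_ne y
  -- there is an edge
  have hE : G.edgeSet.Nonempty :=
    ⟨s(vp, vq), by rw [mem_edgeSet]; exact hcross vp vq hpvp hqvq⟩
  obtain ⟨u, c, hc, hcpos⟩ := EulerAux.euler_existence hconn heven hE
  exact ⟨u, c, hc, hcpos⟩
end

section
/- Let p and q be distinct primes and let α, β ≥ 1 be natural numbers with (α, β) ≠ (1, 1). Then the zero divisor graph Γ[Z_{p^α q^β}] of the ring Z/p^α q^β Z is not Eulerian. -/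
instance inst_s12 (n : ℕ) : DecidableRel (zeroDivisorGraph n).Adj :=
  fun a b => inferInstanceAs (Decidable (a ≠ b ∧ a.val * b.val = 0))

lemma zd_adj_iff {n : ℕ} (a b : ZDVertex n) :
    (zeroDivisorGraph n).Adj a b ↔ a ≠ b ∧ a.val * b.val = 0 := Iff.rfl

open Finset in
lemma zd_evenCase (n m : ℕ) [NeZero n] (hn : n = 2 * m) (hm : 2 < m) :
    ∃ x : ZDVertex n, Odd ((zeroDivisorGraph n).degree x) := by
  have h4n : 4 < n := by omega
  have hv2 : ((2 : ℕ) : ZMod n).val = 2 := ZMod.val_cast_of_lt (by omega)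
  have hvm : ((m : ℕ) : ZMod n).val = m := ZMod.val_cast_of_lt (by omega)
  have h2ne : ((2 : ℕ) : ZMod n) ≠ 0 := by
    intro hc; rw [← ZMod.val_eq_zero, hv2] at hc; omega
  have hmne : ((m : ℕ) : ZMod n) ≠ 0 := by
    intro hc; rw [← ZMod.val_eq_zero, hvm] at hc; omega
  have hprod : ((2 : ℕ) : ZMod n) * ((m : ℕ) : ZMod n) = 0 := by
    rw [← Nat.cast_mul, ← hn, ZMod.natCast_self]
  have hchar : ∀ c : ZMod n, ((2 : ℕ) : ZMod n) * c = 0 → c = 0 ∨ c = ((m : ℕ) : ZMod n) := by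
    intro c hc
    have h1 : ((2 * c.val : ℕ) : ZMod n) = 0 := by
      rw [Nat.cast_mul, ZMod.natCast_rightInverse c]; exact hc
    rw [ZMod.natCast_eq_zero_iff] at h1
    have hlt : c.val < n := ZMod.val_lt c
    obtain ⟨t, ht⟩ := h1
    have ht2 : t = 0 ∨ t = 1 := by
      rcases Nat.lt_or_ge t 2 with h' | h'
      · omega
      · exfalso; nlinarith
    rcases ht2 with rfl | rfl
    · left
      rw [← ZMod.val_eq_zero]; omega
    · right
      have hcv : c.val = m := by omega
      have h2 := ZMod.natCast_rightInverse c
      rw [hcv] at h2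
      exact h2.symm
  set x : ZDVertex n := ⟨((2 : ℕ) : ZMod n), h2ne, ((m : ℕ) : ZMod n), hmne, hprod⟩ with hx
  set ym : ZDVertex n := ⟨((m : ℕ) : ZMod n), hmne, ((2 : ℕ) : ZMod n), h2ne,
    by rw [mul_comm]; exact hprod⟩ with hym
  have hxy : x ≠ ym := by
    intro hc
    have h1 : ((2 : ℕ) : ZMod n) = ((m : ℕ) : ZMod n) := congrArg Subtype.val hc
    have h2 : (2 : ℕ) = m := by rw [← hv2, ← hvm, h1]
    omega
  have hNbhd : (zeroDivisorGraph n).neighborFinset x = {ym} := by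
    ext b
    rw [SimpleGraph.mem_neighborFinset, zd_adj_iff, Finset.mem_singleton]
    constructor
    · rintro ⟨hne, hmul⟩
      rcases hchar b.val hmul with h0 | hm'
      · exact absurd h0 b.2.1
      · exact Subtype.ext hm'
    · rintro rfl
      exact ⟨hxy, hprod⟩
  refine ⟨x, ?_⟩
  have hdeg : (zeroDivisorGraph n).degree x = 1 := by
    rw [SimpleGraph.degree, hNbhd, Finset.card_singleton]
  rw [hdeg]
  exact odd_one

open Finset in
lemma zd_oddCase (n r m : ℕ) [NeZero n] (hn : n = r * m) (hrm : r ∣ m) (hr : 2 ≤ r)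
    (hodd : Odd m) : ∃ x : ZDVertex n, Odd ((zeroDivisorGraph n).degree x) := by
  have hrodd : Odd r := by
    rcases Nat.even_or_odd r with he | ho
    · exfalso
      have : Even m := (even_iff_two_dvd).mpr (dvd_trans (even_iff_two_dvd.mp he) hrm)
      exact (Nat.not_even_iff_odd.mpr hodd) this
    · exact ho
  have hr3 : 3 ≤ r := by
    have := Nat.odd_iff.mp hrodd; omega
  have hm3 : 3 ≤ m := le_trans hr3 (Nat.le_of_dvd (by
    rcases Nat.eq_zero_or_pos m with h | h
    · subst h; simp at hodd
    · exact h) hrm)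
  have hmn : m < n := by nlinarith
  have hrn : r < n := by nlinarith
  have hvm : ((m : ℕ) : ZMod n).val = m := ZMod.val_cast_of_lt hmn
  have hvr : ((r : ℕ) : ZMod n).val = r := ZMod.val_cast_of_lt hrn
  have hmne : ((m : ℕ) : ZMod n) ≠ 0 := by
    intro hc; rw [← ZMod.val_eq_zero, hvm] at hc; omega
  have hrne : ((r : ℕ) : ZMod n) ≠ 0 := by
    intro hc; rw [← ZMod.val_eq_zero, hvr] at hc; omega
  have hprod : ((m : ℕ) : ZMod n) * ((r : ℕ) : ZMod n) = 0 := by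
    rw [← Nat.cast_mul, mul_comm m r, ← hn, ZMod.natCast_self]
  have hker : ∀ c : ZMod n, (((m : ℕ) : ZMod n) * c = 0 ↔ r ∣ c.val) := by
    intro c
    constructor
    · intro hc
      have h1 : ((m * c.val : ℕ) : ZMod n) = 0 := by
        rw [Nat.cast_mul, ZMod.natCast_rightInverse c]; exact hc
      rw [ZMod.natCast_eq_zero_iff] at h1
      obtain ⟨t, ht⟩ := h1
      refine ⟨t, ?_⟩
      have h2 : m * c.val = m * (r * t) := by rw [ht, hn]; ring
      exact Nat.eq_of_mul_eq_mul_left (by omega) h2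
    · rintro ⟨k, hk⟩
      calc ((m : ℕ) : ZMod n) * c = ((m : ℕ) : ZMod n) * ((c.val : ℕ) : ZMod n) := by
            rw [ZMod.natCast_rightInverse c]
        _ = ((n * k : ℕ) : ZMod n) := by rw [← Nat.cast_mul, hk, hn]; ring_nf
        _ = 0 := by rw [Nat.cast_mul, ZMod.natCast_self, zero_mul]
  set K : Finset (ZMod n) := Finset.univ.filter (fun c => r ∣ c.val) with hK
  have hcardK : K.card = m := by
    have hmain := Finset.card_nbij' (s := K) (t := (Finset.univ : Finset (Fin m)))
      (fun c => ⟨c.val / r, by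
        have h1 : c.val < n := ZMod.val_lt c
        have h2 : n = m * r := by rw [hn]; ring
        rw [Nat.div_lt_iff_lt_mul (by omega : 0 < r)]
        omega⟩)
      (fun k => ((r * (k : ℕ) : ℕ) : ZMod n))
      (fun a _ => Finset.mem_univ _)
      (fun k _ => by
        have hlt : r * (k : ℕ) < n := by
          calc r * (k : ℕ) < r * m := mul_lt_mul_of_pos_left k.2 (by omega : 0 < r)
            _ = n := hn.symm
        simp only [hK, Finset.mem_coe, Finset.mem_filter, Finset.mem_univ, true_and]
        rw [ZMod.val_cast_of_lt hlt]
        exact Dvd.intro _ rfl)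
      (fun c hc => by
        simp only [hK, Finset.mem_coe, Finset.mem_filter, Finset.mem_univ, true_and] at hc
        simp only
        rw [Nat.mul_div_cancel' hc, ZMod.natCast_rightInverse c])
      (fun k _ => by
        have hlt : r * (k : ℕ) < n := by
          calc r * (k : ℕ) < r * m := mul_lt_mul_of_pos_left k.2 (by omega : 0 < r)
            _ = n := hn.symm
        apply Fin.ext
        simp only
        rw [ZMod.val_cast_of_lt hlt, Nat.mul_div_cancel_left _ (by omega : 0 < r)])
    simpa using hmain
  have h0K : (0 : ZMod n) ∈ K := by
    simp [hK, ZMod.val_zero]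
  have hmK : ((m : ℕ) : ZMod n) ∈ K.erase 0 := by
    rw [Finset.mem_erase]
    refine ⟨hmne, ?_⟩
    simp [hK, hvm, hrm]
  set T : Finset (ZMod n) := (K.erase 0).erase ((m : ℕ) : ZMod n) with hT
  have hcardT : T.card = m - 2 := by
    rw [hT, Finset.card_erase_of_mem hmK, Finset.card_erase_of_mem h0K, hcardK]
    omega
  refine ⟨⟨((m : ℕ) : ZMod n), hmne, ((r : ℕ) : ZMod n), hrne, hprod⟩, ?_⟩
  set x : ZDVertex n := ⟨((m : ℕ) : ZMod n), hmne, ((r : ℕ) : ZMod n), hrne, hprod⟩ with hx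
  have hdeg : (zeroDivisorGraph n).degree x = m - 2 := by
    rw [SimpleGraph.degree, ← hcardT]
    apply Finset.card_nbij (fun a => a.val)
    · intro b hb
      rw [Finset.mem_coe, SimpleGraph.mem_neighborFinset, zd_adj_iff] at hb
      obtain ⟨hne, hmul⟩ := hb
      rw [hT, Finset.mem_coe, Finset.mem_erase, Finset.mem_erase]
      refine ⟨?_, b.2.1, ?_⟩
      · intro hc
        exact hne (Subtype.ext hc.symm)
      · simp only [hK, Finset.mem_filter, Finset.mem_univ, true_and]
        exact (hker b.val).mp hmul
    · intro a _ b _ hab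
      exact Subtype.ext hab
    · intro c hc
      simp only [hT, Finset.coe_erase, Set.mem_diff, Set.mem_singleton_iff] at hc
      obtain ⟨⟨hcK, hc0⟩, hcm⟩ := hc
      have hcK' : r ∣ c.val := by
        have h1 := hcK
        simp only [hK, Finset.coe_filter, Set.mem_setOf_eq, Finset.mem_univ, true_and] at h1
        exact h1
      refine ⟨⟨c, hc0, ((m : ℕ) : ZMod n), hmne, by
        rw [mul_comm]; exact (hker c).mpr hcK'⟩, ?_, rfl⟩
      refine Finset.mem_coe.mpr ((SimpleGraph.mem_neighborFinset ..).mpr ((zd_adj_iff ..).mpr ?_))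
      constructor
      · intro he
        exact hcm (congrArg Subtype.val he.symm)
      · exact (hker c).mpr hcK'
  rw [hdeg]
  exact Nat.Odd.sub_even (by omega) hodd (by decide)

/-- For distinct primes `p`, `q` and exponents `α, β ≥ 1` with
`(α, β) ≠ (1, 1)`, the zero divisor graph of `ZMod (p^α * q^β)` is not Eulerian. -/
theorem zeroDivisorGraph_p_pow_q_pow_not_eulerian (p q α β : ℕ) (hp : p.Prime)
    (hq : q.Prime) (hpq : p ≠ q) (hα : 1 ≤ α) (hβ : 1 ≤ β) (h : ¬ (α = 1 ∧ β = 1)) :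
    ¬ (zeroDivisorGraph (p ^ α * q ^ β)).IsEulerianGraph := by
  haveI : NeZero (p ^ α * q ^ β) := ⟨by
    have h1 := hp.pos
    have h2 := hq.pos
    positivity⟩
  rintro ⟨v, w, hE, -⟩
  have heven : ∀ x, Even ((zeroDivisorGraph (p ^ α * q ^ β)).degree x) := by
    intro x
    exact (hE.even_degree_iff (x := x)).mpr (fun hc => absurd rfl hc)
  have hodd : ∃ x, Odd ((zeroDivisorGraph (p ^ α * q ^ β)).degree x) := by
    have hpowp : p ^ α = p * p ^ (α - 1) := by
      conv_lhs => rw [show α = (α - 1) + 1 by omega]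
      rw [pow_succ]; ring
    have hpowq : q ^ β = q * q ^ (β - 1) := by
      conv_lhs => rw [show β = (β - 1) + 1 by omega]
      rw [pow_succ]; ring
    by_cases hp2 : p = 2
    · subst hp2
      have hq3 : 3 ≤ q := by have := hq.two_le; omega
      have hm : 2 < 2 ^ (α - 1) * q ^ β := by
        rcases Nat.lt_or_ge α 2 with h1 | h1
        · have hβ2 : 2 ≤ β := by omega
          have h2 : q * q ≤ q ^ β := by
            calc q * q = q ^ 2 := by ring
              _ ≤ q ^ β := Nat.pow_le_pow_right (by omega) hβ2
          have hα1 : α - 1 = 0 := by omega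
          rw [hα1, pow_zero, one_mul]
          nlinarith
        · have h2 : 2 ≤ 2 ^ (α - 1) := by
            calc 2 = 2 ^ 1 := rfl
              _ ≤ 2 ^ (α - 1) := Nat.pow_le_pow_right (by omega) (by omega)
          have h3 : 3 ≤ q ^ β := le_trans hq3 (Nat.le_self_pow (by omega) q)
          nlinarith
      exact zd_evenCase _ _ (by rw [hpowp]; ring) hm
    · by_cases hq2 : q = 2
      · subst hq2
        have hp3 : 3 ≤ p := by have := hp.two_le; omega
        have hm : 2 < p ^ α * 2 ^ (β - 1) := by
          rcases Nat.lt_or_ge β 2 with h1 | h1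
          · have hα2 : 2 ≤ α := by omega
            have h2 : p * p ≤ p ^ α := by
              calc p * p = p ^ 2 := by ring
                _ ≤ p ^ α := Nat.pow_le_pow_right (by omega) hα2
            have hβ1 : β - 1 = 0 := by omega
            rw [hβ1, pow_zero, mul_one]
            nlinarith
          · have h2 : 2 ≤ 2 ^ (β - 1) := by
              calc 2 = 2 ^ 1 := rfl
                _ ≤ 2 ^ (β - 1) := Nat.pow_le_pow_right (by omega) (by omega)
            have h3 : 3 ≤ p ^ α := le_trans hp3 (Nat.le_self_pow (by omega) p)
            nlinarith
        exact zd_evenCase _ _ (by rw [hpowq]; ring) hm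
      · have hpodd : Odd p := hp.odd_of_ne_two hp2
        have hqodd : Odd q := hq.odd_of_ne_two hq2
        rcases (by omega : 2 ≤ α ∨ 2 ≤ β) with hc | hc
        · apply zd_oddCase (p ^ α * q ^ β) p (p ^ (α - 1) * q ^ β)
          · rw [hpowp]; ring
          · exact dvd_mul_of_dvd_left (dvd_pow_self p (by omega)) _
          · exact hp.two_le
          · exact (hpodd.pow).mul (hqodd.pow)
        · apply zd_oddCase (p ^ α * q ^ β) q (p ^ α * q ^ (β - 1))
          · rw [hpowq]; ring
          · exact dvd_mul_of_dvd_right (dvd_pow_self q (by omega)) _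
          · exact hq.two_le
          · exact (hpodd.pow).mul (hqodd.pow)
  obtain ⟨x, hx⟩ := hodd
  exact (Nat.not_even_iff_odd.mpr hx) (heven x)
end

section
/- Let n = p₁^{α₁} p₂^{α₂} ⋯ p_k^{α_k} be the prime factorization of a natural number n with k ≥ 2 distinct primes p₁, …, p_k and exponents α₁, …, α_k ≥ 1, and suppose α_i ≥ 2 for some i. Then the zero divisor graph Γ[Z_n] of the ring Z/nZ is not Eulerian. -/
lemma zmod_mul_cast_eq_zero_iff (n p m : ℕ) [NeZero n] (hn : n = p * m) (hm : 0 < m)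
    (x : ZMod n) : (m : ZMod n) * x = 0 ↔ p ∣ x.val := by
  conv_lhs => rw [← ZMod.natCast_zmod_val x, ← Nat.cast_mul,
    ZMod.natCast_eq_zero_iff]
  generalize x.val = t
  rw [hn, mul_comm p m]
  exact Nat.mul_dvd_mul_iff_left hm

lemma card_dvd_val (n p m : ℕ) [NeZero n] (hn : n = p * m) (hp : 0 < p) :
    (Finset.univ.filter fun x : ZMod n => p ∣ x.val).card = m := by
  rw [← Finset.card_range m]
  refine Finset.card_bij' (fun x _ => x.val / p) (fun j _ => ((p * j : ℕ) : ZMod n)) ?_ ?_ ?_ ?_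
  · intro x hx
    have hlt : x.val < n := ZMod.val_lt x
    rw [Finset.mem_range, Nat.div_lt_iff_lt_mul hp]
    exact lt_of_lt_of_le hlt (by rw [hn, mul_comm])
  · intro j hj
    rw [Finset.mem_range] at hj
    have hlt : p * j < n := by rw [hn]; exact (Nat.mul_lt_mul_left hp).mpr hj
    simp only [Finset.mem_filter, Finset.mem_univ, true_and]
    rw [ZMod.val_natCast_of_lt hlt]
    exact Dvd.intro j rfl
  · intro x hx
    simp only [Finset.mem_filter] at hx
    show ((p * (x.val / p) : ℕ) : ZMod n) = x
    rw [Nat.mul_div_cancel' hx.2, ZMod.natCast_zmod_val]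
  · intro j hj
    rw [Finset.mem_range] at hj
    have hlt : p * j < n := by rw [hn]; exact (Nat.mul_lt_mul_left hp).mpr hj
    show ((p * j : ℕ) : ZMod n).val / p = j
    rw [ZMod.val_natCast_of_lt hlt, Nat.mul_div_cancel_left j hp]

/-- If `n` has at least two distinct prime factors and some prime occurs
in `n` with exponent at least 2, then the zero divisor graph of `ZMod n` is not
Eulerian. -/
theorem zeroDivisorGraph_not_eulerian_of_squareful (n : ℕ)
    (hk : 2 ≤ n.primeFactors.card)
    (hsq : ∃ p ∈ n.primeFactors, 2 ≤ n.factorization p) :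
    ¬ (zeroDivisorGraph n).IsEulerianGraph := by
  rintro ⟨v₀, w, hw, -⟩
  obtain ⟨p, hpmem, hp2⟩ := hsq
  have hp : p.Prime := Nat.prime_of_mem_primeFactors hpmem
  have hn0 : n ≠ 0 := (Nat.mem_primeFactors.mp hpmem).2.2
  haveI : NeZero n := ⟨hn0⟩
  haveI : Fintype (ZDVertex n) := by unfold ZDVertex; infer_instance
  haveI : DecidableRel (zeroDivisorGraph n).Adj := fun a b =>
    inferInstanceAs (Decidable (a ≠ b ∧ a.val * b.val = 0))
  have heven : ∀ x : ZDVertex n, Even ((zeroDivisorGraph n).degree x) := fun x =>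
    hw.even_degree_iff.mpr fun h => absurd rfl h
  -- n ≥ 6
  obtain ⟨q, hq, r, hr, hqr⟩ := Finset.one_lt_card.mp hk
  have hq' : q.Prime := Nat.prime_of_mem_primeFactors hq
  have hr' : r.Prime := Nat.prime_of_mem_primeFactors hr
  have hqrd : q * r ∣ n := Nat.Coprime.mul_dvd_of_dvd_of_dvd
    ((Nat.coprime_primes hq' hr').mpr hqr)
    (Nat.dvd_of_mem_primeFactors hq) (Nat.dvd_of_mem_primeFactors hr)
  have h6 : 6 ≤ n := by
    refine le_trans ?_ (Nat.le_of_dvd (Nat.pos_of_ne_zero hn0) hqrd)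
    have h2q := hq'.two_le
    have h2r := hr'.two_le
    rcases lt_or_gt_of_ne hqr with h | h
    · calc 6 = 2 * 3 := rfl
        _ ≤ q * r := Nat.mul_le_mul h2q (by omega)
    · calc 6 = 3 * 2 := rfl
        _ ≤ q * r := Nat.mul_le_mul (by omega) h2r
  by_cases h2 : 2 ∣ n
  · -- even case: vertex 2 has degree 1
    obtain ⟨m, hm⟩ := h2
    have hm3 : 3 ≤ m := by omega
    have hmlt : m < n := by omega
    have key := zmod_mul_cast_eq_zero_iff n m 2 (by omega) (by norm_num)
    have h2n : ((2 : ℕ) : ZMod n) ≠ 0 := by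
      intro hc
      have hd := (ZMod.natCast_eq_zero_iff 2 n).mp hc
      have := Nat.le_of_dvd (by norm_num) hd; omega
    have hmn : ((m : ℕ) : ZMod n) ≠ 0 := by
      intro hc
      have hd := (ZMod.natCast_eq_zero_iff m n).mp hc
      have := Nat.le_of_dvd (by omega) hd; omega
    have hmul : ((2 : ℕ) : ZMod n) * ((m : ℕ) : ZMod n) = 0 := by
      rw [← Nat.cast_mul, ← hm]; exact ZMod.natCast_self n
    set a : ZDVertex n := ⟨((2 : ℕ) : ZMod n), h2n, ⟨(m : ZMod n), hmn, hmul⟩⟩ with ha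
    set b : ZDVertex n := ⟨((m : ℕ) : ZMod n), hmn,
      ⟨((2 : ℕ) : ZMod n), h2n, by rw [mul_comm]; exact hmul⟩⟩ with hb
    have hne : a ≠ b := by
      intro h
      have hv0 : ((2 : ℕ) : ZMod n) = ((m : ℕ) : ZMod n) := congrArg Subtype.val h
      have hv := congrArg ZMod.val hv0
      rw [ZMod.val_natCast_of_lt (by omega), ZMod.val_natCast_of_lt hmlt] at hv
      omega
    have hnbr : (zeroDivisorGraph n).neighborFinset a = {b} := by
      ext z
      rw [SimpleGraph.mem_neighborFinset, Finset.mem_singleton]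
      constructor
      · rintro ⟨-, hprod⟩
        have hd : m ∣ z.val.val := (key z.val).mp hprod
        have hlt := ZMod.val_lt z.val
        have hz0 : z.val.val ≠ 0 := by
          intro h0
          exact z.2.1 (by rw [← ZMod.natCast_zmod_val z.val, h0, Nat.cast_zero])
        obtain ⟨c, hc⟩ := hd
        have hc2 : c < 2 := Nat.lt_of_mul_lt_mul_left
          (show m * c < m * 2 by omega)
        have hc0 : c ≠ 0 := by
          rintro rfl
          rw [mul_zero] at hc
          exact hz0 hc
        have hc1 : c = 1 := by omega
        have hzv : z.val = ((m : ℕ) : ZMod n) := by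
          rw [← ZMod.natCast_zmod_val z.val, hc, hc1, mul_one]
        exact Subtype.ext hzv
      · rintro rfl
        exact ⟨hne, hmul⟩
    have hdeg : (zeroDivisorGraph n).degree a = 1 := by
      rw [show (zeroDivisorGraph n).degree a
          = ((zeroDivisorGraph n).neighborFinset a).card from rfl, hnbr,
        Finset.card_singleton]
    have := heven a
    rw [hdeg] at this
    exact (Nat.not_even_iff_odd.mpr odd_one) this
  · -- odd case: vertex n/p has odd degree n/p - 2
    have hpne2 : p ≠ 2 := fun h => h2 (h ▸ Nat.dvd_of_mem_primeFactors hpmem)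
    have hp3 : 3 ≤ p := by have := hp.two_le; omega
    obtain ⟨m, hm⟩ : p ∣ n := Nat.dvd_of_mem_primeFactors hpmem
    have hm0 : 0 < m := by
      rcases Nat.eq_zero_or_pos m with rfl | h
      · omega
      · exact h
    have hpm : p ∣ m := by
      have hp2dvd : p * p ∣ p * m := by
        rw [← hm, ← pow_two]
        exact (Nat.Prime.pow_dvd_iff_le_factorization hp hn0).mpr hp2
      exact (Nat.mul_dvd_mul_iff_left hp.pos).mp hp2dvd
    have hm3 : 3 ≤ m := le_trans hp3 (Nat.le_of_dvd hm0 hpm)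
    have hmltn : m < n := by
      rw [hm]
      calc m = 1 * m := (one_mul m).symm
        _ < p * m := (Nat.mul_lt_mul_right hm0).mpr (by omega)
    have key := zmod_mul_cast_eq_zero_iff n p m hm hm0
    have hmn0 : ((m : ℕ) : ZMod n) ≠ 0 := by
      intro hc
      have hd := (ZMod.natCast_eq_zero_iff m n).mp hc
      have := Nat.le_of_dvd (by omega) hd; omega
    have hpn0 : ((p : ℕ) : ZMod n) ≠ 0 := by
      intro hc
      have hd := (ZMod.natCast_eq_zero_iff p n).mp hc
      have := Nat.le_of_dvd (by omega) hd
      have hpm' := Nat.le_of_dvd hm0 hpm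
      omega
    have hmulv : ((m : ℕ) : ZMod n) * ((p : ℕ) : ZMod n) = 0 := by
      rw [← Nat.cast_mul, mul_comm m p, ← hm]; exact ZMod.natCast_self n
    set v : ZDVertex n := ⟨((m : ℕ) : ZMod n), hmn0, ⟨(p : ZMod n), hpn0, hmulv⟩⟩ with hv
    set t : Finset (ZMod n) :=
      (Finset.univ.filter fun x : ZMod n => p ∣ x.val) \ {0, ((m : ℕ) : ZMod n)} with ht
    have hT : ∀ x ∈ t, x ≠ 0 ∧ p ∣ x.val ∧ x ≠ ((m : ℕ) : ZMod n) := by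
      intro x hx
      simp only [ht, Finset.mem_sdiff, Finset.mem_filter, Finset.mem_univ, true_and,
        Finset.mem_insert, Finset.mem_singleton, not_or] at hx
      exact ⟨hx.2.1, hx.1, hx.2.2⟩
    have hdeg : (zeroDivisorGraph n).degree v = t.card := by
      rw [show (zeroDivisorGraph n).degree v
          = ((zeroDivisorGraph n).neighborFinset v).card from rfl]
      refine Finset.card_bij' (fun z _ => z.val)
        (fun x hx => ⟨x, (hT x hx).1,
          ⟨((m : ℕ) : ZMod n), hmn0, by rw [mul_comm]; exact (key x).mpr (hT x hx).2.1⟩⟩)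
        ?_ ?_ ?_ ?_
      · intro z hz
        rw [SimpleGraph.mem_neighborFinset] at hz
        obtain ⟨hvz, hprod⟩ := hz
        have hpd : p ∣ z.val.val := (key z.val).mp hprod
        simp only [ht, Finset.mem_sdiff, Finset.mem_filter, Finset.mem_univ, true_and,
          Finset.mem_insert, Finset.mem_singleton, not_or]
        refine ⟨hpd, z.2.1, ?_⟩
        intro hzm
        exact hvz (Subtype.ext hzm.symm)
      · intro x hx
        refine (SimpleGraph.mem_neighborFinset ..).mpr ?_
        refine ⟨?_, (key x).mpr (hT x hx).2.1⟩
        intro h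
        exact (hT x hx).2.2 (congrArg Subtype.val h).symm
      · intro z hz
        exact Subtype.ext rfl
      · intro x hx
        rfl
    have htcard : t.card = m - 2 := by
      have hsub : ({0, ((m : ℕ) : ZMod n)} : Finset (ZMod n))
          ⊆ Finset.univ.filter fun x : ZMod n => p ∣ x.val := by
        intro x hx
        simp only [Finset.mem_insert, Finset.mem_singleton] at hx
        rcases hx with rfl | rfl
        · simp
        · simp [ZMod.val_natCast_of_lt hmltn, hpm]
      rw [ht, Finset.card_sdiff_of_subset hsub, card_dvd_val n p m hm hp.pos,
        Finset.card_pair (Ne.symm hmn0)]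
    have hfin := heven v
    rw [hdeg, htcard] at hfin
    rw [Nat.even_sub (by omega : 2 ≤ m)] at hfin
    have hme : Even m := hfin.mpr (by norm_num)
    exact h2 (dvd_trans hme.two_dvd ⟨p, by rw [hm, mul_comm]⟩)
end

section
/- For any prime p, the zero divisor graph Γ[Z_{p^n}] of the ring Z/pⁿZ with n ≥ 3 has a vertex of odd degree; in particular, the nonzero multiples of p^{n−1} are vertices of odd degree when p is odd, and when p = 2 the vertices divisible by 2 but not by 4 have odd degree. -/
section Helpers

variable {p n : ℕ}

lemma zmod_natCast_val_self {m : ℕ} [NeZero m] (x : ZMod m) :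
    ((x.val : ℕ) : ZMod m) = x := by
  simp [ZMod.natCast_val, ZMod.cast_id]

lemma zmod_pow_mul_eq_zero_iff (p n k : ℕ) (hp : 1 < p) (hk : k ≤ n) (y : ZMod (p ^ n)) :
    (p : ZMod (p ^ n)) ^ k * y = 0 ↔ (p : ZMod (p ^ n)) ^ (n - k) ∣ y := by
  have : NeZero (p ^ n) := ⟨pow_ne_zero _ (by omega)⟩
  constructor
  · intro h
    have hy : ((p ^ k * y.val : ℕ) : ZMod (p ^ n)) = 0 := by
      push_cast [zmod_natCast_val_self]
      exact h
    rw [ZMod.natCast_eq_zero_iff] at hy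
    have hdvd : p ^ (n - k) ∣ y.val := by
      have h2 : p ^ k * p ^ (n - k) ∣ p ^ k * y.val := by
        rwa [← pow_add, Nat.add_sub_cancel' hk]
      exact (Nat.mul_dvd_mul_iff_left (pow_pos (by omega) k)).mp h2
    obtain ⟨t, ht⟩ := hdvd
    refine ⟨(t : ZMod (p ^ n)), ?_⟩
    have := congrArg (Nat.cast : ℕ → ZMod (p ^ n)) ht
    push_cast [zmod_natCast_val_self] at this
    exact this
  · rintro ⟨z, rfl⟩
    rw [← mul_assoc, ← pow_add, Nat.add_sub_cancel' hk]
    have h0 : ((p ^ n : ℕ) : ZMod (p ^ n)) = 0 := ZMod.natCast_self _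
    push_cast at h0
    rw [h0, zero_mul]

lemma zmod_card_dvd_pow (p n j : ℕ) (hp : 1 < p) (hj : j ≤ n) :
    {y : ZMod (p ^ n) | (p : ZMod (p ^ n)) ^ j ∣ y}.ncard = p ^ (n - j) := by
  have : NeZero (p ^ n) := ⟨pow_ne_zero _ (by omega)⟩
  have : NeZero (p ^ (n - j)) := ⟨pow_ne_zero _ (by omega)⟩
  set f : ZMod (p ^ (n - j)) → ZMod (p ^ n) := fun t => ((p ^ j * t.val : ℕ) : ZMod (p ^ n))
    with hf
  have hinj : Function.Injective f := by
    intro t s h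
    have ht : p ^ j * t.val < p ^ n := by
      calc p ^ j * t.val < p ^ j * p ^ (n - j) :=
            mul_lt_mul_of_pos_left (ZMod.val_lt t) (pow_pos (by omega : 0 < p) j)
        _ = p ^ n := by rw [← pow_add, Nat.add_sub_cancel' hj]
    have hs : p ^ j * s.val < p ^ n := by
      calc p ^ j * s.val < p ^ j * p ^ (n - j) :=
            mul_lt_mul_of_pos_left (ZMod.val_lt s) (pow_pos (by omega : 0 < p) j)
        _ = p ^ n := by rw [← pow_add, Nat.add_sub_cancel' hj]
    have := congrArg ZMod.val h
    rw [hf] at this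
    simp only [ZMod.val_cast_of_lt ht, ZMod.val_cast_of_lt hs] at this
    exact ZMod.val_injective _ (Nat.eq_of_mul_eq_mul_left (pow_pos (by omega) j) this)
  have hset : {y : ZMod (p ^ n) | (p : ZMod (p ^ n)) ^ j ∣ y} = Set.range f := by
    ext y
    simp only [Set.mem_setOf_eq, Set.mem_range]
    constructor
    · rintro ⟨z, rfl⟩
      refine ⟨(z.val : ZMod (p ^ (n - j))), ?_⟩
      rw [hf]
      simp only
      rw [ZMod.val_natCast]
      have hq : p ^ j * p ^ (n - j) = p ^ n := by rw [← pow_add, Nat.add_sub_cancel' hj]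
      have key : p ^ j * z.val = p ^ j * (z.val % p ^ (n - j)) + p ^ n * (z.val / p ^ (n - j)) := by
        conv_lhs => rw [← Nat.mod_add_div z.val (p ^ (n - j))]
        rw [Nat.mul_add, ← Nat.mul_assoc, hq]
      have h0 : (p : ZMod (p ^ n)) ^ n = 0 := by
        have h1 := ZMod.natCast_self (p ^ n)
        push_cast at h1
        exact h1
      have := congrArg (Nat.cast : ℕ → ZMod (p ^ n)) key
      push_cast at this ⊢
      rw [zmod_natCast_val_self] at this
      rw [this, h0, zero_mul, add_zero]
    · rintro ⟨t, rfl⟩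
      rw [hf]
      refine ⟨(t.val : ZMod (p ^ n)), ?_⟩
      push_cast
      ring
  rw [hset, ← Nat.card_coe_set_eq, Nat.card_range_of_injective hinj, Nat.card_zmod]

lemma zmod_not_unit_dvd (p n : ℕ) (hp : p.Prime) (hn : 0 < n) (x : ZMod (p ^ n))
    (hx : ¬ IsUnit x) : (p : ZMod (p ^ n)) ∣ x := by
  have : NeZero (p ^ n) := ⟨pow_ne_zero _ hp.pos.ne'⟩
  have hco : ¬ Nat.Coprime x.val (p ^ n) := by
    intro h
    apply hx
    rw [← zmod_natCast_val_self x]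
    exact (ZMod.isUnit_iff_coprime _ _).mpr h
  have hpx : p ∣ x.val := by
    by_contra hnd
    exact hco (Nat.Coprime.pow_right n ((hp.coprime_iff_not_dvd.mpr hnd).symm))
  obtain ⟨t, ht⟩ := hpx
  refine ⟨(t : ZMod (p ^ n)), ?_⟩
  have := congrArg (Nat.cast : ℕ → ZMod (p ^ n)) ht
  push_cast [zmod_natCast_val_self] at this
  exact this

lemma zd_image_neighborSet {m : ℕ} (v : ZDVertex m) (d : ZMod m)
    (key : ∀ y : ZMod m, (v.val * y = 0 ↔ d ∣ y)) :
    Subtype.val '' ((zeroDivisorGraph m).neighborSet v)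
      = {y : ZMod m | d ∣ y} \ {0, v.val} := by
  obtain ⟨hv0, -⟩ := v.property
  ext y
  simp only [Set.mem_image, SimpleGraph.mem_neighborSet, Set.mem_diff, Set.mem_setOf_eq,
    Set.mem_insert_iff, Set.mem_singleton_iff, zeroDivisorGraph]
  constructor
  · rintro ⟨u, ⟨hne, hmul⟩, rfl⟩
    refine ⟨(key _).mp hmul, ?_⟩
    push_neg
    exact ⟨u.property.1, fun h => hne (Subtype.ext h.symm)⟩
  · rintro ⟨hdvd, hne⟩
    push_neg at hne
    refine ⟨⟨y, hne.1, v.val, hv0, by rw [mul_comm]; exact (key y).mpr hdvd⟩,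
      ⟨?_, (key y).mpr hdvd⟩, rfl⟩
    exact fun h => hne.2 (congrArg Subtype.val h).symm

end Helpers

lemma part_odd (p n : ℕ) (hp : p.Prime) (hn : 3 ≤ n) (hodd : Odd p)
    (v : ZDVertex (p ^ n)) (hv : (p : ZMod (p ^ n)) ^ (n - 1) ∣ v.val) :
    Odd ((zeroDivisorGraph (p ^ n)).neighborSet v).ncard := by
  have hp1 : 1 < p := hp.one_lt
  have : NeZero (p ^ n) := ⟨pow_ne_zero _ (by omega)⟩
  obtain ⟨hv0, -⟩ := v.property
  have hpow0 : (p : ZMod (p ^ n)) ^ n = 0 := by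
    have h1 := ZMod.natCast_self (p ^ n)
    push_cast at h1
    exact h1
  obtain ⟨w, hw⟩ := hv
  have hwu : IsUnit w := by
    by_contra h
    obtain ⟨t, ht⟩ := zmod_not_unit_dvd p n hp (by omega) w h
    apply hv0
    rw [hw, ht, ← mul_assoc, ← pow_succ]
    rw [show n - 1 + 1 = n by omega, hpow0, zero_mul]
  have key : ∀ y : ZMod (p ^ n), (v.val * y = 0 ↔ (p : ZMod (p ^ n)) ^ 1 ∣ y) := by
    intro y
    rw [hw, mul_comm ((p : ZMod (p ^ n)) ^ (n - 1)) w, mul_assoc, hwu.mul_right_eq_zero,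
      zmod_pow_mul_eq_zero_iff p n (n - 1) hp1 (by omega) y, show n - (n - 1) = 1 by omega]
  rw [show ((zeroDivisorGraph (p ^ n)).neighborSet v).ncard = ({y : ZMod (p ^ n) | (p : ZMod (p ^ n)) ^ 1 ∣ y} \ {0, v.val}).ncard from by
    rw [← zd_image_neighborSet v _ key]; exact (Set.ncard_image_of_injective _ Subtype.val_injective).symm]
  have hsub : ({0, v.val} : Set (ZMod (p ^ n))) ⊆ {y : ZMod (p ^ n) | (p : ZMod (p ^ n)) ^ 1 ∣ y} := by
    rintro y (rfl | rfl)
    · exact dvd_zero _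
    · rw [pow_one]
      exact dvd_trans (dvd_pow_self (p : ZMod (p ^ n)) (by omega : n - 1 ≠ 0)) ⟨w, hw⟩
  rw [Set.ncard_diff hsub, Set.ncard_pair (Ne.symm hv0), zmod_card_dvd_pow p n 1 hp1 (by omega)]
  have hoddpow : Odd (p ^ (n - 1)) := hodd.pow
  have h3 : 3 ≤ p := by
    have h2 := hp.two_le
    rcases Nat.odd_iff.mp hodd with h
    omega
  have hge : 3 ≤ p ^ (n - 1) := le_trans h3 (Nat.le_self_pow (by omega) p)
  exact Nat.Odd.sub_even (by omega) hoddpow (by norm_num)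

lemma part_two (n : ℕ) (hn : 3 ≤ n) (v : ZDVertex (2 ^ n))
    (h2 : (2 : ZMod (2 ^ n)) ∣ v.val) (h4 : ¬ (4 : ZMod (2 ^ n)) ∣ v.val) :
    Odd ((zeroDivisorGraph (2 ^ n)).neighborSet v).ncard := by
  have : NeZero (2 ^ n) := ⟨pow_ne_zero _ (by omega)⟩
  obtain ⟨hv0, -⟩ := v.property
  have hcast : ((2 : ℕ) : ZMod (2 ^ n)) = (2 : ZMod (2 ^ n)) := by push_cast; ring
  obtain ⟨c, hc⟩ := h2
  have hcu : IsUnit c := by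
    by_contra h
    obtain ⟨t, ht⟩ := zmod_not_unit_dvd 2 n Nat.prime_two (by omega) c h
    rw [hcast] at ht
    exact h4 ⟨t, by rw [hc, ht, ← mul_assoc, show (2 : ZMod (2 ^ n)) * 2 = 4 by norm_num]⟩
  have key : ∀ y : ZMod (2 ^ n), (v.val * y = 0 ↔ ((2 : ℕ) : ZMod (2 ^ n)) ^ (n - 1) ∣ y) := by
    intro y
    rw [hc, mul_comm (2 : ZMod (2 ^ n)) c, mul_assoc, hcu.mul_right_eq_zero]
    have := zmod_pow_mul_eq_zero_iff 2 n 1 (by omega) (by omega) y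
    rw [pow_one, hcast] at this
    exact this
  rw [show ((zeroDivisorGraph (2 ^ n)).neighborSet v).ncard = ({y : ZMod (2 ^ n) | ((2 : ℕ) : ZMod (2 ^ n)) ^ (n - 1) ∣ y} \ {0, v.val}).ncard from by
    rw [← zd_image_neighborSet v _ key]; exact (Set.ncard_image_of_injective _ Subtype.val_injective).symm]
  set A := {y : ZMod (2 ^ n) | ((2 : ℕ) : ZMod (2 ^ n)) ^ (n - 1) ∣ y} with hA
  have hvA : v.val ∉ A := by
    intro hmem
    apply h4
    refine dvd_trans ?_ hmem
    refine ⟨((2 : ℕ) : ZMod (2 ^ n)) ^ (n - 3), ?_⟩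
    rw [show (4 : ZMod (2 ^ n)) = ((2 : ℕ) : ZMod (2 ^ n)) ^ 2 by rw [hcast]; norm_num,
      ← pow_add, show 2 + (n - 3) = n - 1 by omega]
  have hdiff : A \ {0, v.val} = A \ {0} := by
    ext y
    simp only [Set.mem_diff, Set.mem_insert_iff, Set.mem_singleton_iff]
    constructor
    · rintro ⟨hy, hne⟩
      push_neg at hne
      exact ⟨hy, hne.1⟩
    · rintro ⟨hy, hne⟩
      exact ⟨hy, by push_neg; exact ⟨hne, fun h => hvA (h ▸ hy)⟩⟩
  have hcard : A.ncard = 2 := by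
    have := zmod_card_dvd_pow 2 n (n - 1) (by omega) (by omega)
    rw [show n - (n - 1) = 1 by omega, pow_one] at this
    exact this
  rw [hdiff, Set.ncard_diff (by rintro y rfl; exact dvd_zero _ : ({0} : Set (ZMod (2 ^ n))) ⊆ A),
    Set.ncard_singleton, hcard]
  norm_num

/-- For any prime `p` and `n ≥ 3`, the zero divisor graph of
`ZMod (p^n)` has a vertex of odd degree; in particular, when `p` is odd the nonzero
multiples of `p^(n-1)` have odd degree, and when `p = 2` the vertices divisible by `2`
but not by `4` have odd degree. -/
theorem zeroDivisorGraph_p_pow_odd_degree_vertex (p n : ℕ) (hp : p.Prime) (hn : 3 ≤ n) :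
    (∃ v : ZDVertex (p ^ n), Odd ((zeroDivisorGraph (p ^ n)).neighborSet v).ncard) ∧
    (Odd p → ∀ v : ZDVertex (p ^ n), (p : ZMod (p ^ n)) ^ (n - 1) ∣ v.val →
      Odd ((zeroDivisorGraph (p ^ n)).neighborSet v).ncard) ∧
    (p = 2 → ∀ v : ZDVertex (p ^ n),
      (2 : ZMod (p ^ n)) ∣ v.val → ¬ (4 : ZMod (p ^ n)) ∣ v.val →
      Odd ((zeroDivisorGraph (p ^ n)).neighborSet v).ncard) := by
  have hp1 : 1 < p := hp.one_lt
  have hNe : NeZero (p ^ n) := ⟨pow_ne_zero _ (by omega)⟩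
  have hpow0 : (p : ZMod (p ^ n)) ^ n = 0 := by
    have h1 := ZMod.natCast_self (p ^ n)
    push_cast at h1
    exact h1
  have hne_pow : ∀ k : ℕ, k < n → (p : ZMod (p ^ n)) ^ k ≠ 0 := by
    intro k hk h
    have : ((p ^ k : ℕ) : ZMod (p ^ n)) = 0 := by push_cast; exact h
    rw [ZMod.natCast_eq_zero_iff] at this
    have := Nat.le_of_dvd (pow_pos (by omega) k) this
    exact absurd this (by
      apply not_le_of_gt
      exact Nat.pow_lt_pow_right hp1 hk)
  refine ⟨?_, fun hodd v hv => part_odd p n hp hn hodd v hv, ?_⟩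
  · rcases hp.eq_two_or_odd' with rfl | hodd
    · -- p = 2, use vertex 2
      have h2 : (2 : ZMod (2 ^ n)) = ((2 : ℕ) : ZMod (2 ^ n)) ^ 1 := by push_cast; ring
      refine ⟨⟨(2 : ZMod (2 ^ n)), ?_, ((2 : ℕ) : ZMod (2 ^ n)) ^ (n - 1), ?_, ?_⟩, ?_⟩
      · rw [h2]; exact hne_pow 1 (by omega)
      · exact hne_pow (n - 1) (by omega)
      · rw [h2, ← pow_add, show 1 + (n - 1) = n by omega, hpow0]
      · apply part_two n hn
        · exact dvd_refl _
        · rintro ⟨z, hz⟩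
          apply hne_pow (n - 1) (by omega)
          have h4 : (4 : ZMod (2 ^ n)) = ((2 : ℕ) : ZMod (2 ^ n)) ^ 2 := by push_cast; ring
          have := congrArg (fun x => ((2 : ℕ) : ZMod (2 ^ n)) ^ (n - 2) * x) hz
          simp only at this
          rw [h4, ← mul_assoc, ← pow_add, show n - 2 + 2 = n by omega, hpow0, zero_mul] at this
          rw [show ((2 : ℕ) : ZMod (2 ^ n)) ^ (n - 1) = ((2 : ℕ) : ZMod (2 ^ n)) ^ (n - 2) * 2 by
            rw [show ((2 : ZMod (2 ^ n))) = ((2 : ℕ) : ZMod (2 ^ n)) ^ 1 from h2, ← pow_add]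
            congr 1
            omega]
          rw [this]
    · -- p odd, use vertex p^(n-1)
      refine ⟨⟨(p : ZMod (p ^ n)) ^ (n - 1), hne_pow (n - 1) (by omega), (p : ZMod (p ^ n)), ?_, ?_⟩, ?_⟩
      · have := hne_pow 1 (by omega); rwa [pow_one] at this
      · rw [← pow_succ, show n - 1 + 1 = n by omega, hpow0]
      · exact part_odd p n hp hn hodd _ (dvd_refl _)
  · rintro rfl v h2 h4
    exact part_two n hn v h2 h4
end

section
/- Let p and q be distinct primes with p = 2 or q = 2. Then the zero divisor graph Γ[Z_{pq}] of the ring Z/pqZ has a vertex of odd degree, and Γ[Z_{pq}] is not Eulerian. -/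
instance instZDVFintype (n : ℕ) [NeZero n] : Fintype (ZDVertex n) :=
  Subtype.fintype _

instance instZDVAdjDec (n : ℕ) : DecidableRel (zeroDivisorGraph n).Adj :=
  fun a b => inferInstanceAs (Decidable (a ≠ b ∧ a.val * b.val = 0))

lemma zd_key (r : ℕ) (hr : r.Prime) (hr2 : r ≠ 2) :
    ∃ v : ZDVertex (2 * r), ((zeroDivisorGraph (2 * r)).neighborSet v).ncard = 1 := by
  have hr3 : 3 ≤ r := by have := hr.two_le; omega
  haveI : NeZero (2 * r) := ⟨by omega⟩
  have hA : ((2 : ℕ) : ZMod (2 * r)) * ((r : ℕ) : ZMod (2 * r)) = 0 := by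
    rw [← Nat.cast_mul]
    exact ZMod.natCast_self _
  have h2ne : ((2 : ℕ) : ZMod (2 * r)) ≠ 0 := by
    rw [Ne, ZMod.natCast_eq_zero_iff]
    intro h
    exact absurd (Nat.le_of_dvd (by omega) h) (by omega)
  have hrne : ((r : ℕ) : ZMod (2 * r)) ≠ 0 := by
    rw [Ne, ZMod.natCast_eq_zero_iff]
    intro h
    exact absurd (Nat.le_of_dvd (by omega) h) (by omega)
  set v : ZDVertex (2 * r) := ⟨((2 : ℕ) : ZMod (2 * r)), h2ne, ⟨_, hrne, hA⟩⟩ with hv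
  set w : ZDVertex (2 * r) := ⟨((r : ℕ) : ZMod (2 * r)), hrne, ⟨_, h2ne, by rw [mul_comm ((r:ℕ):ZMod (2*r))]; exact hA⟩⟩ with hw
  have hvw : v ≠ w := by
    intro h
    have h' : ((2 : ℕ) : ZMod (2 * r)) = ((r : ℕ) : ZMod (2 * r)) := congrArg Subtype.val h
    have := congrArg ZMod.val h'
    rw [ZMod.val_cast_of_lt (by omega), ZMod.val_cast_of_lt (by omega)] at this
    omega
  refine ⟨v, ?_⟩
  have hset : (zeroDivisorGraph (2 * r)).neighborSet v = {w} := by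
    ext b
    constructor
    · rintro ⟨hne, hmul⟩
      have hb0 : b.val ≠ 0 := b.prop.1
      have hcast : ((2 * b.val.val : ℕ) : ZMod (2 * r)) = 0 := by
        push_cast
        rw [ZMod.natCast_zmod_val]
        exact hmul
      rw [ZMod.natCast_eq_zero_iff] at hcast
      obtain ⟨c, hc⟩ := hcast
      rw [mul_assoc] at hc
      have hbrc : b.val.val = r * c := Nat.eq_of_mul_eq_mul_left (by norm_num) hc
      have hblt : b.val.val < 2 * r := ZMod.val_lt _
      have hbne : b.val.val ≠ 0 := by
        intro h
        exact hb0 (ZMod.val_injective _ (by rw [h, ZMod.val_zero]))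
      have hc1 : c = 1 := by
        rcases Nat.lt_or_ge c 2 with h2 | h2
        · interval_cases c <;> simp_all
        · have : r * 2 ≤ r * c := Nat.mul_le_mul_left r h2
          omega
      have hbr : b.val.val = r := by rw [hc1, mul_one] at hbrc; exact hbrc
      have : b.val = ((r : ℕ) : ZMod (2 * r)) := by
        apply ZMod.val_injective
        rw [hbr, ZMod.val_cast_of_lt (by omega)]
      exact Subtype.ext this
    · rintro rfl
      exact ⟨hvw, hA⟩
  rw [hset, Set.ncard_singleton]

lemma zd_main (r : ℕ) (hr : r.Prime) (hr2 : r ≠ 2) :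
    (∃ v : ZDVertex (2 * r), Odd ((zeroDivisorGraph (2 * r)).neighborSet v).ncard) ∧
    ¬ (zeroDivisorGraph (2 * r)).IsEulerianGraph := by
  haveI : NeZero (2 * r) := ⟨by have := hr.two_le; omega⟩
  obtain ⟨v, hv⟩ := zd_key r hr hr2
  have hdeg : (zeroDivisorGraph (2 * r)).degree v = 1 := by
    rw [← hv, Set.ncard_eq_toFinset_card']
    rfl
  refine ⟨⟨v, hv ▸ odd_one⟩, ?_⟩
  rintro ⟨u, walk, heul, -⟩
  have heven : Even ((zeroDivisorGraph (2 * r)).degree v) :=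
    heul.even_degree_iff.mpr (fun h => absurd rfl h)
  rw [hdeg] at heven
  exact (Nat.not_even_iff_odd.mpr odd_one) heven

/-- For distinct primes `p`, `q` with `p = 2` or `q = 2`, the zero
divisor graph of `ZMod (p*q)` has a vertex of odd degree and is not Eulerian. -/
theorem zeroDivisorGraph_pq_even_not_eulerian (p q : ℕ) (hp : p.Prime) (hq : q.Prime)
    (hpq : p ≠ q) (h2 : p = 2 ∨ q = 2) :
    (∃ v : ZDVertex (p * q), Odd ((zeroDivisorGraph (p * q)).neighborSet v).ncard) ∧
    ¬ (zeroDivisorGraph (p * q)).IsEulerianGraph := by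
  rcases h2 with rfl | rfl
  · exact zd_main q hq (Ne.symm hpq)
  · rw [mul_comm]
    exact zd_main p hp hpq
end
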